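/- arXiv:0706.1393 — 11 statements merged into one kernel-verified Lean document; each statement's English description precedes it below -/
import Mathlib

section
/- Let f : Fin m → Fin a and g : Fin m → Fin b be surjective functions. Then there exist n : ℕ and surjective functions p₀ : Fin a → Fin n and p₁ : Fin b → Fin n with p₀ ∘ f = p₁ ∘ g, such that for every k : ℕ and surjective functions q₀ : Fin a → Fin k, q₁ : Fin b → Fin k with q₀ ∘ f = q₁ ∘ g there exists a unique function h : Fin n → Fin k with h ∘ p₀ = q₀ and h ∘ p₁ = q₁; moreover this unique h is automatically surjective. (In other words, the category whose objects are the finite sets Fin n and whose morphisms are surjective functions has pushouts, computed as in the category of finite sets and all functions.) -/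
/-!
The pushout of `f : X → A` and `g : X → B` in the category of all functions is the quotient of
`A ⊕ B` gluing `f x` to `g x`. Every class meets `A` because `g` is surjective, and meets `B`
because `f` is, so both legs are surjective; for finite `A` and `B` the quotient is finite and
can be renumbered as some `Fin n`. A mediating map `h` with `h ∘ p₀ = q₀` is surjective as soon
as `q₀` is, so the universal property among all functions restricts to surjections.
-/

open Function

section TypePushout

variable {X A B : Type*} (f : X → A) (g : X → B)

inductive TypePushout.Rel : A ⊕ B → A ⊕ B → Prop
  | glue (x : X) : TypePushout.Rel (.inl (f x)) (.inr (g x))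

def TypePushout := Quot (TypePushout.Rel f g)

namespace TypePushout

def inl (y : A) : TypePushout f g := Quot.mk _ (.inl y)

def inr (z : B) : TypePushout f g := Quot.mk _ (.inr z)

instance [Finite A] [Finite B] : Finite (TypePushout f g) :=
  Quot.finite _

theorem inl_apply_eq_inr_apply (x : X) : inl f g (f x) = inr f g (g x) :=
  Quot.sound (.glue x)

theorem inl_comp_eq_inr_comp : inl f g ∘ f = inr f g ∘ g :=
  funext (inl_apply_eq_inr_apply f g)

theorem inl_surjective (hg : Surjective g) : Surjective (inl f g) := by
  rintro ⟨y | z⟩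
  · exact ⟨y, rfl⟩
  · obtain ⟨x, rfl⟩ := hg z
    exact ⟨f x, inl_apply_eq_inr_apply f g x⟩

theorem inr_surjective (hf : Surjective f) : Surjective (inr f g) := by
  rintro ⟨y | z⟩
  · obtain ⟨x, rfl⟩ := hf y
    exact ⟨g x, (inl_apply_eq_inr_apply f g x).symm⟩
  · exact ⟨z, rfl⟩

variable {f g} {C : Type*}

theorem hom_ext {h h' : TypePushout f g → C} (hl : h ∘ inl f g = h' ∘ inl f g)
    (hr : h ∘ inr f g = h' ∘ inr f g) : h = h' := by
  funext p
  rcases p with ⟨y | z⟩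
  · exact congrFun hl y
  · exact congrFun hr z

def desc (q₀ : A → C) (q₁ : B → C) (hq : q₀ ∘ f = q₁ ∘ g) : TypePushout f g → C :=
  Quot.lift (Sum.elim q₀ q₁) fun _ _ ⟨x⟩ => congrFun hq x

variable {q₀ : A → C} {q₁ : B → C} (hq : q₀ ∘ f = q₁ ∘ g)

@[simp]
theorem desc_comp_inl : desc q₀ q₁ hq ∘ inl f g = q₀ := rfl

@[simp]
theorem desc_comp_inr : desc q₀ q₁ hq ∘ inr f g = q₁ := rfl

theorem eq_desc {h : TypePushout f g → C} (hl : h ∘ inl f g = q₀) (hr : h ∘ inr f g = q₁) :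
    h = desc q₀ q₁ hq :=
  hom_ext (hl.trans (desc_comp_inl hq).symm) (hr.trans (desc_comp_inr hq).symm)

end TypePushout

end TypePushout

open TypePushout in
/-- The category of finite sets `Fin n` and surjective functions has
pushouts, computed as in the category of finite sets and all functions. -/
theorem slin_surjections_have_pushouts {m a b : ℕ}
    (f : Fin m → Fin a) (g : Fin m → Fin b)
    (hf : Function.Surjective f) (hg : Function.Surjective g) :
    ∃ (n : ℕ) (p₀ : Fin a → Fin n) (p₁ : Fin b → Fin n),
      Function.Surjective p₀ ∧ Function.Surjective p₁ ∧ p₀ ∘ f = p₁ ∘ g ∧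
      ∀ (k : ℕ) (q₀ : Fin a → Fin k) (q₁ : Fin b → Fin k),
        Function.Surjective q₀ → Function.Surjective q₁ → q₀ ∘ f = q₁ ∘ g →
        (∃! h : Fin n → Fin k, h ∘ p₀ = q₀ ∧ h ∘ p₁ = q₁) ∧
        ∀ h : Fin n → Fin k, h ∘ p₀ = q₀ → h ∘ p₁ = q₁ → Function.Surjective h := by
  obtain ⟨n, ⟨e⟩⟩ := Finite.exists_equiv_fin (TypePushout f g)
  refine ⟨n, e ∘ inl f g, e ∘ inr f g, e.surjective.comp (inl_surjective f g hg),
    e.surjective.comp (inr_surjective f g hf), congrArg (e ∘ ·) (inl_comp_eq_inr_comp f g),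
    fun k q₀ q₁ hq₀ _ hq => ⟨⟨desc q₀ q₁ hq ∘ e.symm, ?_, ?_⟩, ?_⟩⟩
  · constructor <;> funext _ <;> exact congrArg (desc q₀ q₁ hq) (e.symm_apply_apply _)
  · rintro h ⟨hl, hr⟩
    exact (e.eq_comp_symm _ _).2 (eq_desc hq hl hr)
  · rintro h hl -
    exact Surjective.of_comp (hl ▸ hq₀)
end

section
/- Let f : Fin m → Fin a and g : Fin m → Fin b be monotone surjective functions. Then there exists exactly one triple (n, p₀, p₁) with n : ℕ and p₀ : Fin a → Fin n, p₁ : Fin b → Fin n monotone surjective, such that p₀ ∘ f = p₁ ∘ g and the square is a pushout in sLin, i.e. for every k : ℕ and monotone surjective q₀ : Fin a → Fin k, q₁ : Fin b → Fin k with q₀ ∘ f = q₁ ∘ g there exists a unique monotone surjective h : Fin n → Fin k with h ∘ p₀ = q₀ and h ∘ p₁ = q₁. (sLin has strict pushouts.) -/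
/-!
Two points of `Fin m` are identified in the pushout of `f` and `g` exactly when a chain of
`f`-fibres and `g`-fibres links them. Fibres of monotone maps are intervals, so the blocks of this
equivalence are intervals too, and a block ends exactly at a point past which both `f` and `g`
strictly increase. Numbering each point by the number of such cuts below it gives the pushout
map. Pushouts agree on the nose because the comparison map between two of them is a monotone
surjection `Fin n → Fin n`, hence the identity.
-/

/-- A commuting square `p₀ ∘ f = p₁ ∘ g` of monotone surjections is a pushout in
`sLin` (the category of finite linear orders `Fin n` and monotone surjections). -/
def SLinPushout {m a b n : ℕ} (f : Fin m → Fin a) (g : Fin m → Fin b)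
    (p₀ : Fin a → Fin n) (p₁ : Fin b → Fin n) : Prop :=
  ∀ (k : ℕ) (q₀ : Fin a → Fin k) (q₁ : Fin b → Fin k),
    Monotone q₀ → Function.Surjective q₀ → Monotone q₁ → Function.Surjective q₁ →
    q₀ ∘ f = q₁ ∘ g →
    ∃! h : Fin n → Fin k,
      (Monotone h ∧ Function.Surjective h) ∧ h ∘ p₀ = q₀ ∧ h ∘ p₁ = q₁

open Finset Function

section CountBelow

variable {ι : Type*} [LinearOrder ι]

def countBelow (S : Finset ι) (x : ι) : ℕ := #{s ∈ S | s < x}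

variable (S : Finset ι)

theorem countBelow_mono : Monotone (countBelow S) := fun _ _ hxy =>
  card_le_card (monotone_filter_right S fun _ _ hs => hs.trans_le hxy)

theorem countBelow_lt_card {x s : ι} (hs : s ∈ S) (hxs : x ≤ s) : countBelow S x < #S :=
  card_lt_card (filter_ssubset.2 ⟨s, hs, hxs.not_gt⟩)

theorem countBelow_strictMonoOn : StrictMonoOn (countBelow S) S := by
  intro s hs t ht hst
  refine card_lt_card ((ssubset_iff_of_subset ?_).2 ⟨s, ?_, ?_⟩)
  · exact monotone_filter_right S fun _ _ hu => hu.trans hst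
  · simp [mem_coe.1 hs, hst]
  · simp

theorem countBelow_surjOn : Set.SurjOn (countBelow S) S (range #S) :=
  surjOn_of_injOn_of_card_le _ (fun _ hs => mem_range.2 (countBelow_lt_card S hs le_rfl))
    (countBelow_strictMonoOn S).injOn (card_range _).le

variable {S}

theorem countBelow_eq_countBelow_iff {x y : ι} (hxy : x ≤ y) :
    countBelow S x = countBelow S y ↔ ∀ s ∈ S, x ≤ s → y ≤ s := by
  constructor
  · intro h s hs hxs
    by_contra! hsy
    refine h.not_lt (card_lt_card ((ssubset_iff_of_subset ?_).2 ⟨s, ?_, ?_⟩))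
    · exact monotone_filter_right S fun _ _ hu => hu.trans_le hxy
    · simp [hs, hsy]
    · simp [hxs]
  · intro h
    refine congrArg card (filter_congr fun s hs => ⟨fun hsx => hsx.trans_le hxy, fun hsy => ?_⟩)
    by_contra! hxs
    exact (h s hs hxs).not_gt hsy

end CountBelow

theorem Setoid.le_of_forall_rel_of_le {ι : Type*} [LinearOrder ι] {r s : Setoid ι}
    (h : ∀ x y, x ≤ y → r x y → s x y) : r ≤ s := fun x y hxy =>
  (le_total x y).elim (h x y · hxy) fun hyx => s.symm' (h y x hyx (r.symm' hxy))

theorem Monotone.eq_of_le_of_le {α β : Type*} [Preorder α] [PartialOrder β] {f : α → β}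
    (hf : Monotone f) {x y z : α} (hxy : x ≤ y) (hyz : y ≤ z) (h : f x = f z) : f x = f y :=
  (hf hxy).antisymm (h ▸ hf hyz)

section PushoutCuts

variable {ι α β : Type*} [LinearOrder ι] [Fintype ι] [PartialOrder α] [PartialOrder β]

open Classical in
/-- The last points of the blocks of the pushout of `f` and `g`. -/
noncomputable def pushoutCuts (f : ι → α) (g : ι → β) : Finset ι :=
  {x | ∀ y, x < y → f x < f y ∧ g x < g y}

variable {f : ι → α} {g : ι → β}

theorem mem_pushoutCuts {x : ι} : x ∈ pushoutCuts f g ↔ ∀ y, x < y → f x < f y ∧ g x < g y := by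
  simp [pushoutCuts]

theorem pushoutCuts_comm : pushoutCuts f g = pushoutCuts g f := by
  ext x
  simp only [mem_pushoutCuts, and_comm]

theorem exists_mem_pushoutCuts_le (x : ι) : ∃ s ∈ pushoutCuts f g, x ≤ s := by
  obtain ⟨t, -, ht⟩ := exists_max_image univ id ⟨x, mem_univ x⟩
  exact ⟨t, mem_pushoutCuts.2 fun y hty => ((ht y (mem_univ y)).not_gt hty).elim, ht x (mem_univ x)⟩

theorem ker_le_ker_countBelow_pushoutCuts (hf : Monotone f) :
    Setoid.ker f ≤ Setoid.ker (countBelow (pushoutCuts f g)) := by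
  refine Setoid.le_of_forall_rel_of_le fun x y hxy hfxy => ?_
  refine (countBelow_eq_countBelow_iff hxy).2 fun s hs hxs => ?_
  by_contra! hsy
  exact ((mem_pushoutCuts.1 hs y hsy).1).not_ge (hfxy ▸ hf hxs)

theorem sup_ker_rel_of_forall_mem_pushoutCuts (hf : Monotone f) (hg : Monotone g) {x y : ι}
    (hxy : x ≤ y) (hcut : ∀ s ∈ pushoutCuts f g, x ≤ s → y ≤ s) :
    (Setoid.ker f ⊔ Setoid.ker g) x y := by
  set r := Setoid.ker f ⊔ Setoid.ker g
  have hr_f {x y : ι} (h : f x = f y) : r x y := (le_sup_left : Setoid.ker f ≤ r) h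
  have hr_g {x y : ι} (h : g x = g y) : r x y := (le_sup_right : Setoid.ker g ≤ r) h
  induction x using WellFoundedGT.induction with
  | _ x ih =>
  rcases hxy.eq_or_lt with rfl | hxy
  · exact r.refl' x
  obtain ⟨w, hxw, hw⟩ : ∃ w, x < w ∧ (f x = f w ∨ g x = g w) := by
    have hx : x ∉ pushoutCuts f g := fun hx => (hcut x hx le_rfl).not_gt hxy
    simp only [mem_pushoutCuts, not_forall, not_and_or] at hx
    obtain ⟨w, hxw, hw⟩ := hx
    exact ⟨w, hxw, hw.imp (hf hxw.le).eq_of_not_lt (hg hxw.le).eq_of_not_lt⟩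
  rcases le_total y w with hyw | hwy
  · exact hw.elim (fun hw => hr_f (hf.eq_of_le_of_le hxy.le hyw hw))
      (fun hw => hr_g (hg.eq_of_le_of_le hxy.le hyw hw))
  · exact r.trans' (hw.elim hr_f hr_g)
      (ih w hxw hwy fun s hs hws => hcut s hs (hxw.le.trans hws))

theorem ker_countBelow_pushoutCuts (hf : Monotone f) (hg : Monotone g) :
    Setoid.ker (countBelow (pushoutCuts f g)) = Setoid.ker f ⊔ Setoid.ker g := by
  refine le_antisymm ?_ (sup_le (ker_le_ker_countBelow_pushoutCuts hf) ?_)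
  · exact Setoid.le_of_forall_rel_of_le fun _ _ hxy hP =>
      sup_ker_rel_of_forall_mem_pushoutCuts hf hg hxy ((countBelow_eq_countBelow_iff hxy).1 hP)
  · rw [pushoutCuts_comm]
    exact ker_le_ker_countBelow_pushoutCuts hg

end PushoutCuts

theorem exists_monotone_comp_eq {ι κ α : Type*} [LinearOrder ι] [PartialOrder κ] [Preorder α]
    {p : ι → κ} {q : ι → α} (hp : Monotone p) (hps : Surjective p) (hq : Monotone q)
    (hker : Setoid.ker p ≤ Setoid.ker q) : ∃ h : κ → α, Monotone h ∧ h ∘ p = q := by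
  refine ⟨q ∘ surjInv hps, fun i j hij => ?_, funext fun x => hker (surjInv_eq hps (p x))⟩
  rcases hij.eq_or_lt with rfl | hij
  · exact le_rfl
  · rw [← surjInv_eq hps i, ← surjInv_eq hps j] at hij
    exact hq (hp.reflect_lt hij).le

theorem Monotone.eq_id_of_surjective {ι : Type*} [LinearOrder ι] [Finite ι] {h : ι → ι}
    (hm : Monotone h) (hs : Surjective h) : h = id :=
  have hsm := hm.strictMono_of_injective (Finite.injective_iff_surjective.2 hs)
  funext fun _ => hsm.apply_le.antisymm hsm.le_apply

section SLinPushout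

variable {m a b n : ℕ} {f : Fin m → Fin a} {g : Fin m → Fin b}

theorem slinPushout_of_ker_le {p₀ : Fin a → Fin n} {p₁ : Fin b → Fin n} (hfm : Monotone f)
    (hfs : Surjective f) (hgs : Surjective g) (hp₀m : Monotone p₀) (hp₀s : Surjective p₀)
    (hcomm : p₀ ∘ f = p₁ ∘ g) (hker : Setoid.ker (p₀ ∘ f) ≤ Setoid.ker f ⊔ Setoid.ker g) :
    SLinPushout f g p₀ p₁ := by
  intro k q₀ q₁ hq₀m hq₀s _ _ hq
  have hq_ker : Setoid.ker f ⊔ Setoid.ker g ≤ Setoid.ker (q₀ ∘ f) :=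
    sup_le (fun x y h => congrArg q₀ h) fun x y h => by
      change (q₀ ∘ f) x = (q₀ ∘ f) y
      rw [hq]
      exact congrArg q₁ h
  obtain ⟨h, hhm, hh⟩ := exists_monotone_comp_eq (hp₀m.comp hfm) (hp₀s.comp hfs)
    (hq₀m.comp hfm) (hker.trans hq_ker)
  have h₀ : h ∘ p₀ = q₀ := hfs.injective_comp_right hh
  have h₁ : h ∘ p₁ = q₁ := hgs.injective_comp_right <| show (h ∘ p₁) ∘ g = q₁ ∘ g by
    rw [comp_assoc, ← hcomm, ← hq]
    exact hh
  refine ⟨h, ⟨⟨hhm, .of_comp (h₀ ▸ hq₀s)⟩, h₀, h₁⟩, ?_⟩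
  rintro h' ⟨-, h₀', -⟩
  exact hp₀s.injective_comp_right (h₀'.trans h₀.symm)

theorem exists_slinPushout (hfm : Monotone f) (hfs : Surjective f) (hgm : Monotone g)
    (hgs : Surjective g) :
    ∃ (n : ℕ) (p₀ : Fin a → Fin n) (p₁ : Fin b → Fin n),
      Monotone p₀ ∧ Surjective p₀ ∧ Monotone p₁ ∧ Surjective p₁ ∧
      p₀ ∘ f = p₁ ∘ g ∧ SLinPushout f g p₀ p₁ := by
  set S := pushoutCuts f g
  let P : Fin m → Fin #S := fun x =>
    ⟨countBelow S x, have ⟨_, hs, hxs⟩ := exists_mem_pushoutCuts_le x; countBelow_lt_card S hs hxs⟩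
  have hPm : Monotone P := fun _ _ h => countBelow_mono S h
  have hPs : Surjective P := fun i =>
    have ⟨s, _, hs⟩ := countBelow_surjOn S (mem_range.2 i.2)
    ⟨s, Fin.ext hs⟩
  have hPker : Setoid.ker P = Setoid.ker f ⊔ Setoid.ker g :=
    (Setoid.ext fun _ _ => Fin.val_inj.symm).trans (ker_countBelow_pushoutCuts hfm hgm)
  obtain ⟨p₀, hp₀m, hp₀⟩ := exists_monotone_comp_eq hfm hfs hPm (hPker ▸ le_sup_left)
  obtain ⟨p₁, hp₁m, hp₁⟩ := exists_monotone_comp_eq hgm hgs hPm (hPker ▸ le_sup_right)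
  have hp₀s : Surjective p₀ := .of_comp (hp₀ ▸ hPs)
  have hcomm : p₀ ∘ f = p₁ ∘ g := hp₀.trans hp₁.symm
  exact ⟨#S, p₀, p₁, hp₀m, hp₀s, hp₁m, .of_comp (hp₁ ▸ hPs), hcomm,
    slinPushout_of_ker_le hfm hfs hgs hp₀m hp₀s hcomm (hp₀ ▸ hPker.le)⟩

end SLinPushout

/-- `sLin` has strict pushouts: every span of monotone surjections has
exactly one pushout cocone. -/
theorem slin_has_strict_pushouts {m a b : ℕ}
    (f : Fin m → Fin a) (g : Fin m → Fin b)
    (hfm : Monotone f) (hfs : Function.Surjective f)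
    (hgm : Monotone g) (hgs : Function.Surjective g) :
    ∃! t : Σ n : ℕ, (Fin a → Fin n) × (Fin b → Fin n),
      Monotone t.2.1 ∧ Function.Surjective t.2.1 ∧
      Monotone t.2.2 ∧ Function.Surjective t.2.2 ∧
      t.2.1 ∘ f = t.2.2 ∘ g ∧ SLinPushout f g t.2.1 t.2.2 := by
  obtain ⟨n, p₀, p₁, hp₀m, hp₀s, hp₁m, hp₁s, hcomm, hpush⟩ := exists_slinPushout hfm hfs hgm hgs
  refine ⟨⟨n, p₀, p₁⟩, ⟨hp₀m, hp₀s, hp₁m, hp₁s, hcomm, hpush⟩, ?_⟩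
  rintro ⟨n', p₀', p₁'⟩ ⟨hp₀'m, hp₀'s, hp₁'m, hp₁'s, hcomm', hpush'⟩
  obtain ⟨h, ⟨⟨hhm, hhs⟩, rfl, rfl⟩, -⟩ := hpush n' p₀' p₁' hp₀'m hp₀'s hp₁'m hp₁'s hcomm'
  obtain ⟨h', ⟨⟨-, hh's⟩, -⟩, -⟩ := hpush' n p₀ p₁ hp₀m hp₀s hp₁m hp₁s hcomm
  obtain rfl : n' = n := (Fin.le_of_surjective h hhs).antisymm (Fin.le_of_surjective h' hh's)
  obtain rfl : h = id := hhm.eq_id_of_surjective hhs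
  rfl
end

section
/- Let f : Fin m → Fin a and g : Fin m → Fin b be monotone surjective functions, and let p₀ : Fin a → Fin n, p₁ : Fin b → Fin n be monotone surjections with p₀ ∘ f = p₁ ∘ g which form a pushout square in sLin. Then this square is also a pushout in the category of finite sets and arbitrary functions: for every k : ℕ and functions q₀ : Fin a → Fin k, q₁ : Fin b → Fin k (not necessarily monotone or surjective) with q₀ ∘ f = q₁ ∘ g, there exists a unique function h : Fin n → Fin k with h ∘ p₀ = q₀ and h ∘ p₁ = q₁. -/
section Aux

variable {m a b : ℕ} (f : Fin m → Fin a) (g : Fin m → Fin b)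

/-- `c` is linked to `c-1` via a common `g`-fiber. -/
def myL (c : ℕ) : Prop :=
  ∃ i j : Fin m, g i = g j ∧ (f i : ℕ) + 1 = c ∧ (f j : ℕ) = c

open Classical in
/-- number of "breaks" at positions `≤ x`. -/
noncomputable def myE (x : Fin a) : ℕ :=
  ((Finset.Iic x).filter (fun c : Fin a => 0 < (c : ℕ) ∧ ¬ myL f g (c : ℕ))).card

variable {f g}

lemma e_mono {x y : Fin a} (h : x ≤ y) : myE f g x ≤ myE f g y := by
  classical
  exact Finset.card_le_card
    (Finset.filter_subset_filter _ (Finset.Iic_subset_Iic.2 h))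

lemma e_zero {x : Fin a} (hx : (x : ℕ) = 0) : myE f g x = 0 := by
  classical
  rw [myE, Finset.card_eq_zero, Finset.filter_eq_empty_iff]
  intro c hc
  have : c ≤ x := Finset.mem_Iic.1 hc
  have : (c : ℕ) ≤ (x : ℕ) := Fin.le_def.1 this
  rw [hx] at this
  intro h
  omega

lemma Iic_succ {x y : Fin a} (hxy : (y : ℕ) = (x : ℕ) + 1) :
    Finset.Iic y = insert y (Finset.Iic x) := by
  ext c
  simp only [Finset.mem_Iic, Finset.mem_insert]
  constructor
  · intro h
    have hc : (c : ℕ) ≤ (y : ℕ) := h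
    rcases eq_or_lt_of_le hc with h' | h'
    · left; exact Fin.ext h'
    · right; exact Fin.le_def.2 (by omega)
  · rintro (rfl | h)
    · exact le_refl _
    · exact Fin.le_def.2 (by have : (c : ℕ) ≤ (x : ℕ) := h; omega)

lemma y_notMem {x y : Fin a} (hxy : (y : ℕ) = (x : ℕ) + 1) : y ∉ Finset.Iic x := by
  simp only [Finset.mem_Iic]
  intro h
  have : (y : ℕ) ≤ (x : ℕ) := h
  omega

lemma e_step_link {x y : Fin a} (hxy : (y : ℕ) = (x : ℕ) + 1)
    (hL : myL f g (y : ℕ)) : myE f g y = myE f g x := by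
  classical
  rw [myE, Iic_succ hxy, Finset.filter_insert,
    if_neg (by push_neg; intro _; exact hL)]
  rfl

lemma e_step_break {x y : Fin a} (hxy : (y : ℕ) = (x : ℕ) + 1)
    (hL : ¬ myL f g (y : ℕ)) : myE f g y = myE f g x + 1 := by
  classical
  rw [myE, Iic_succ hxy, Finset.filter_insert, if_pos ⟨by omega, hL⟩,
    Finset.card_insert_of_notMem
      (fun h => y_notMem hxy (Finset.mem_of_mem_filter _ h))]
  rfl

/-- if all adjacent positions between `x` and `y` are linked, `e` is constant. -/
lemma e_eq_of_links : ∀ d : ℕ, ∀ x y : Fin a, (y : ℕ) = (x : ℕ) + d →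
    (∀ c : Fin a, (x : ℕ) < (c : ℕ) → (c : ℕ) ≤ (y : ℕ) → myL f g (c : ℕ)) →
    myE f g x = myE f g y := by
  intro d
  induction d with
  | zero => intro x y hxy _; congr 1; exact Fin.ext (by omega)
  | succ d ih =>
    intro x y hxy hc
    have hx1 : (x : ℕ) + 1 < a := by have := y.isLt; omega
    set x1 : Fin a := ⟨(x : ℕ) + 1, hx1⟩ with hx1def
    have hL : myL f g ((x1 : ℕ)) := hc x1 (by simp [x1]) (by simp [x1]; omega)
    have h1 : myE f g x1 = myE f g x := e_step_link rfl hL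
    rw [← h1]
    exact ih x1 y (by simp [x1]; omega)
      (fun c h1 h2 => hc c (by simp [x1] at h1; omega) h2)

/-- any link-respecting function is constant on blocks of `e`. -/
lemma q_eq_of_e_eq_aux {α : Sort*} {q : Fin a → α}
    (hq : ∀ c c' : Fin a, (c' : ℕ) + 1 = (c : ℕ) → myL f g (c : ℕ) → q c' = q c) :
    ∀ d : ℕ, ∀ x y : Fin a, (y : ℕ) = (x : ℕ) + d →
      myE f g x = myE f g y → q x = q y := by
  intro d
  induction d with
  | zero => intro x y hxy _; congr 1; exact Fin.ext (by omega)
  | succ d ih =>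
    intro x y hxy he
    have hx1 : (x : ℕ) + 1 < a := by have := y.isLt; omega
    set x1 : Fin a := ⟨(x : ℕ) + 1, hx1⟩ with hx1def
    have hm1 : myE f g x ≤ myE f g x1 := e_mono (Fin.le_def.2 (by simp [x1]))
    have hm2 : myE f g x1 ≤ myE f g y := e_mono (Fin.le_def.2 (by simp [x1]; omega))
    have hL : myL f g ((x1 : ℕ)) := by
      by_contra hL
      have := e_step_break (x := x) (y := x1) rfl hL
      omega
    have he1 : myE f g x1 = myE f g x := e_step_link rfl hL
    have := hq x1 x (by simp [x1]) hL
    rw [this]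
    exact ih x1 y (by simp [x1]; omega) (by omega)

lemma q_eq_of_e_eq {α : Sort*} {q : Fin a → α}
    (hq : ∀ c c' : Fin a, (c' : ℕ) + 1 = (c : ℕ) → myL f g (c : ℕ) → q c' = q c)
    {x y : Fin a} (he : myE f g x = myE f g y) : q x = q y := by
  rcases le_total x y with h | h
  · exact q_eq_of_e_eq_aux hq ((y : ℕ) - x) x y (by have := Fin.le_def.1 h; omega) he
  · exact (q_eq_of_e_eq_aux hq ((x : ℕ) - y) y x (by have := Fin.le_def.1 h; omega) he.symm).symm

/-- nonskipping property of monotone surjections. -/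
lemma nonskip (hfm : Monotone f) (hfs : Function.Surjective f)
    {i : Fin m} (h : (i : ℕ) + 1 < m) : (f ⟨(i : ℕ) + 1, h⟩ : ℕ) ≤ (f i : ℕ) + 1 := by
  by_contra hlt
  push_neg at hlt
  have hva : (f i : ℕ) + 1 < a := lt_trans hlt (f ⟨(i : ℕ) + 1, h⟩).isLt
  obtain ⟨t, ht⟩ := hfs ⟨(f i : ℕ) + 1, hva⟩
  have htv : (f t : ℕ) = (f i : ℕ) + 1 := congrArg Fin.val ht
  rcases le_or_gt t i with hti | hti
  · have h2 : (f t : ℕ) ≤ (f i : ℕ) := Fin.le_def.1 (hfm hti)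
    omega
  · have h3 : (f ⟨(i : ℕ) + 1, h⟩ : ℕ) ≤ (f t : ℕ) :=
      Fin.le_def.1 (hfm (Fin.le_def.2 (by simpa using Fin.lt_def.1 hti)))
    omega

/-- all adjacent positions within the image of a `g`-fiber are linked. -/
lemma linkA (hfm : Monotone f) (hfs : Function.Surjective f) (hgm : Monotone g) :
    ∀ d : ℕ, ∀ i j : Fin m, (j : ℕ) = (i : ℕ) + d → g i = g j →
      ∀ c : ℕ, (f i : ℕ) < c → c ≤ (f j : ℕ) → myL f g c := by
  intro d
  induction d with
  | zero =>
    intro i j hij _ c h1 h2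
    have : i = j := Fin.ext (by omega)
    subst this
    omega
  | succ d ih =>
    intro i j hij hg c h1 h2
    have hi1 : (i : ℕ) + 1 < m := by have := j.isLt; omega
    set i1 : Fin m := ⟨(i : ℕ) + 1, hi1⟩ with hi1def
    have hii1 : i ≤ i1 := Fin.le_def.2 (by simp [i1])
    have hi1j : i1 ≤ j := Fin.le_def.2 (by simp [i1]; omega)
    have hg1 : g i1 = g i := le_antisymm (hg ▸ hgm hi1j) (hgm hii1)
    rcases le_or_gt c (f i1 : ℕ) with hc | hc
    · have hns := nonskip hfm hfs hi1
      rw [← hi1def] at hns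
      have hfe : (f i1 : ℕ) = c := by omega
      exact ⟨i, i1, hg1.symm, by omega, hfe⟩
    · exact ih i1 j (by simp [i1]; omega) (hg1.trans hg) c hc h2

/-- `e ∘ f` is constant on `g`-fibers. -/
lemma e_f_const (hfm : Monotone f) (hfs : Function.Surjective f) (hgm : Monotone g)
    {i j : Fin m} (hg : g i = g j) : myE f g (f i) = myE f g (f j) := by
  rcases le_total i j with hij | hij
  · have hf := Fin.le_def.1 (hfm hij)
    exact e_eq_of_links ((f j : ℕ) - (f i : ℕ)) (f i) (f j) (by omega)
      (fun c h1 h2 => linkA hfm hfs hgm ((j : ℕ) - i) i j (by have := Fin.le_def.1 hij; omega) hg c h1 h2)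
  · have hf := Fin.le_def.1 (hfm hij)
    exact (e_eq_of_links ((f i : ℕ) - (f j : ℕ)) (f j) (f i) (by omega)
      (fun c h1 h2 => linkA hfm hfs hgm ((i : ℕ) - j) j i (by have := Fin.le_def.1 hij; omega) hg.symm c h1 h2)).symm

/-- `e` attains every value up to `e x`. -/
lemma e_surj_aux : ∀ t : ℕ, ∀ x : Fin a, (x : ℕ) = t → ∀ v, v ≤ myE f g x →
    ∃ y : Fin a, myE f g y = v := by
  intro t
  induction t with
  | zero =>
    intro x hx v hv
    rw [e_zero hx] at hv
    exact ⟨x, by rw [e_zero hx]; omega⟩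
  | succ t ih =>
    intro x hx v hv
    have hxa : t < a := by have := x.isLt; omega
    set x' : Fin a := ⟨t, hxa⟩ with hx'def
    rcases le_or_gt v (myE f g x') with h | h
    · exact ih x' (by simp [x']) v h
    · refine ⟨x, ?_⟩
      by_cases hL : myL f g (x : ℕ)
      · have := e_step_link (x := x') (y := x) (by simp [x']; omega) hL
        omega
      · have := e_step_break (x := x') (y := x) (by simp [x']; omega) hL
        omega

end Aux



/-- A pushout square in `sLin` is also a pushout in the category of
finite sets and arbitrary functions. -/
theorem slin_pushout_is_set_pushout {m a b n : ℕ}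
    (f : Fin m → Fin a) (g : Fin m → Fin b)
    (p₀ : Fin a → Fin n) (p₁ : Fin b → Fin n)
    (hfm : Monotone f) (hfs : Function.Surjective f)
    (hgm : Monotone g) (hgs : Function.Surjective g)
    (hp₀m : Monotone p₀) (hp₀s : Function.Surjective p₀)
    (hp₁m : Monotone p₁) (hp₁s : Function.Surjective p₁)
    (hcomm : p₀ ∘ f = p₁ ∘ g)
    (hpo : SLinPushout f g p₀ p₁) :
    ∀ (k : ℕ) (q₀ : Fin a → Fin k) (q₁ : Fin b → Fin k),
      q₀ ∘ f = q₁ ∘ g →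
      ∃! h : Fin n → Fin k, h ∘ p₀ = q₀ ∧ h ∘ p₁ = q₁ := by
  intro k q₀ q₁ hq
  rcases Nat.eq_zero_or_pos n with hn | hn
  · -- degenerate case: everything is empty
    subst hn
    have ha : a = 0 := by
      rcases Nat.eq_zero_or_pos a with h | h
      · exact h
      · exact ((p₀ ⟨0, h⟩).elim0 : a = 0)
    have hb : b = 0 := by
      rcases Nat.eq_zero_or_pos b with h | h
      · exact h
      · exact ((p₁ ⟨0, h⟩).elim0 : b = 0)
    subst ha; subst hb
    refine ⟨Fin.elim0, ⟨?_, ?_⟩, ?_⟩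
    · funext x; exact x.elim0
    · funext y; exact y.elim0
    · intro h' _; funext z; exact z.elim0
  · -- main case
    have ha : 0 < a := (hp₀s ⟨0, hn⟩).choose.pos
    set last : Fin a := ⟨a - 1, by omega⟩ with hlast
    set k₀ : ℕ := myE f g last + 1 with hk₀
    have hElt : ∀ x : Fin a, myE f g x < k₀ := by
      intro x
      have : myE f g x ≤ myE f g last :=
        e_mono (Fin.le_def.2 (by simp [last]; omega))
      omega
    set r₀ : Fin a → Fin k₀ := fun x => ⟨myE f g x, hElt x⟩ with hr₀def
    have hr₀m : Monotone r₀ := fun x y hxy => Fin.le_def.2 (e_mono hxy)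
    have hr₀s : Function.Surjective r₀ := by
      intro v
      obtain ⟨y, hy⟩ := e_surj_aux (f := f) (g := g) (a - 1) last (by simp [last]) v
        (by have := v.isLt; omega)
      exact ⟨y, Fin.ext hy⟩
    have hgsp : ∀ y : Fin b, g (Classical.choose (hgs y)) = y :=
      fun y => Classical.choose_spec (hgs y)
    set r₁ : Fin b → Fin k₀ := fun y => r₀ (f (Classical.choose (hgs y))) with hr₁def
    have hr₁f : ∀ i : Fin m, r₁ (g i) = r₀ (f i) := by
      intro i
      exact Fin.ext (e_f_const hfm hfs hgm (hgsp (g i)))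
    have hcomm' : r₀ ∘ f = r₁ ∘ g := funext fun i => (hr₁f i).symm
    have hr₁m : Monotone r₁ := by
      intro y y' hyy
      set i := Classical.choose (hgs y)
      set i' := Classical.choose (hgs y')
      rcases le_or_gt i i' with hii | hii
      · exact Fin.le_def.2 (e_mono (hfm hii))
      · have : g i' ≤ g i := hgm (le_of_lt hii)
        have hyy' : y = y' := le_antisymm hyy (by rwa [hgsp y, hgsp y'] at this)
        exact le_of_eq (by rw [hyy'])
    have hr₁s : Function.Surjective r₁ := by
      intro v
      obtain ⟨x, hx⟩ := hr₀s v
      obtain ⟨i, hi⟩ := hfs x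
      exact ⟨g i, (hr₁f i).trans (by rw [hi, hx])⟩
    obtain ⟨h, ⟨⟨hhm, hhs⟩, hh0, hh1⟩, -⟩ := hpo k₀ r₀ r₁ hr₀m hr₀s hr₁m hr₁s hcomm'
    -- q₀ respects links
    have hq₀L : ∀ c c' : Fin a, (c' : ℕ) + 1 = (c : ℕ) → myL f g (c : ℕ) → q₀ c' = q₀ c := by
      rintro c c' hcc ⟨i, j, hgij, hfi, hfj⟩
      have h1 : f i = c' := Fin.ext (by omega)
      have h2 : f j = c := Fin.ext hfj
      calc q₀ c' = q₀ (f i) := by rw [h1]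
        _ = q₁ (g i) := congrFun hq i
        _ = q₁ (g j) := by rw [hgij]
        _ = q₀ (f j) := (congrFun hq j).symm
        _ = q₀ c := by rw [h2]
    set sct : Fin k₀ → Fin a := fun v => Classical.choose (hr₀s v) with hsctdef
    have hsct : ∀ v, r₀ (sct v) = v := fun v => Classical.choose_spec (hr₀s v)
    set H : Fin n → Fin k := fun z => q₀ (sct (h z)) with hHdef
    have hq₀r₀ : ∀ x x' : Fin a, r₀ x = r₀ x' → q₀ x = q₀ x' := by
      intro x x' hxx
      exact q_eq_of_e_eq hq₀L (congrArg Fin.val hxx)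
    have hH0 : H ∘ p₀ = q₀ := by
      funext x
      have h1 : h (p₀ x) = r₀ x := congrFun hh0 x
      show q₀ (sct (h (p₀ x))) = q₀ x
      rw [h1]
      exact hq₀r₀ _ _ (hsct (r₀ x))
    have hH1 : H ∘ p₁ = q₁ := by
      funext y
      have h1 : h (p₁ y) = r₁ y := congrFun hh1 y
      show q₀ (sct (h (p₁ y))) = q₁ y
      rw [h1]
      have h2 : q₀ (sct (r₁ y)) = q₀ (f (Classical.choose (hgs y))) :=
        hq₀r₀ _ _ (hsct _)
      rw [h2]
      calc q₀ (f (Classical.choose (hgs y)))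
          = q₁ (g (Classical.choose (hgs y))) := congrFun hq _
        _ = q₁ y := by rw [hgsp y]
    refine ⟨H, ⟨hH0, hH1⟩, ?_⟩
    intro h' ⟨h'0, h'1⟩
    funext z
    obtain ⟨x, hx⟩ := hp₀s z
    rw [← hx]
    calc h' (p₀ x) = q₀ x := congrFun h'0 x
      _ = H (p₀ x) := (congrFun hH0 x).symm
end

section
/- Pushouts interact with ordinal sum in sLin: suppose the square of monotone surjections f : Fin m → Fin a, g : Fin m → Fin b, p₀ : Fin a → Fin n, p₁ : Fin b → Fin n with p₀ ∘ f = p₁ ∘ g is a pushout in sLin, and likewise the square f' : Fin m' → Fin a', g' : Fin m' → Fin b', p₀' : Fin a' → Fin n', p₁' : Fin b' → Fin n' with p₀' ∘ f' = p₁' ∘ g' is a pushout in sLin. Then the square formed by the ordinal sums f + f' : Fin (m+m') → Fin (a+a'), g + g' : Fin (m+m') → Fin (b+b'), p₀ + p₀' : Fin (a+a') → Fin (n+n'), p₁ + p₁' : Fin (b+b') → Fin (n+n') (which satisfies (p₀ + p₀') ∘ (f + f') = (p₁ + p₁') ∘ (g + g')) is again a pushout in sLin. -/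
/-- The ordinal sum `f + f' : Fin (m + m') → Fin (n + n')` of two maps of finite
linear orders: the first block is mapped by `f` to the first block, the second
block by `f'` to the second block. -/
def ordSum {m n m' n' : ℕ} (f : Fin m → Fin n) (f' : Fin m' → Fin n')
    (i : Fin (m + m')) : Fin (n + n') :=
  if h : (i : ℕ) < m then Fin.castAdd n' (f ⟨i, h⟩)
  else Fin.natAdd n (f' ⟨(i : ℕ) - m, by have := i.isLt; omega⟩)

/-! The pushout property of a square in `sLin` extends from monotone surjections to arbitrary
monotone maps into a linear order, by corestricting the two maps to their common image. Given
a cocone `q₀, q₁` on the ordinal sum square, its restrictions to the two blocks are cocones on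
the two given squares; the resulting factorizations `h₀, h₁` glue to `Fin.append h₀ h₁`. This
is monotone because every value of `h₀` is a value of `q₀` on the first block, hence below every
value of `h₁`, and it is unique because `p₀ + p₀'` is surjective. -/

open Function

theorem Fin.monotone_append {α : Type*} [Preorder α] {m n : ℕ} {u : Fin m → α} {v : Fin n → α}
    (hu : Monotone u) (hv : Monotone v) (huv : ∀ i j, u i ≤ v j) : Monotone (Fin.append u v) := by
  intro x y hxy
  induction x using Fin.addCases with
  | left i =>
    induction y using Fin.addCases with
    | left j => simpa using hu ((Fin.strictMono_castAdd n).le_iff_le.mp hxy)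
    | right j => simpa using huv i j
  | right i =>
    induction y using Fin.addCases with
    | left j => rw [Fin.le_def, Fin.val_natAdd, Fin.val_castAdd] at hxy; omega
    | right j => simpa using hv (by simpa using hxy)

theorem Fin.castAdd_le_natAdd {m n : ℕ} (i : Fin m) (j : Fin n) : castAdd n i ≤ natAdd m j := by
  rw [Fin.le_def, Fin.val_castAdd, Fin.val_natAdd]; omega

section ordSum

variable {m n m' n' : ℕ} (f : Fin m → Fin n) (f' : Fin m' → Fin n')

@[simp]
theorem ordSum_castAdd (i : Fin m) : ordSum f f' (Fin.castAdd m' i) = Fin.castAdd n' (f i) := by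
  simp [ordSum]

@[simp]
theorem ordSum_natAdd (j : Fin m') : ordSum f f' (Fin.natAdd m j) = Fin.natAdd n (f' j) := by
  simp [ordSum]

theorem append_comp_ordSum {α : Type*} (u : Fin n → α) (v : Fin n' → α) :
    Fin.append u v ∘ ordSum f f' = Fin.append (u ∘ f) (v ∘ f') := by
  funext i
  induction i using Fin.addCases <;> simp

theorem ordSum_comp {k k' : ℕ} (p : Fin n → Fin k) (p' : Fin n' → Fin k') :
    ordSum p p' ∘ ordSum f f' = ordSum (p ∘ f) (p' ∘ f') := by
  funext i
  induction i using Fin.addCases <;> simp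

variable {f f'}

theorem append_comp_ordSum_eq {α : Type*} {u : Fin n → α} {v : Fin n' → α}
    {q : Fin (m + m') → α} (hu : u ∘ f = q ∘ Fin.castAdd m') (hv : v ∘ f' = q ∘ Fin.natAdd m) :
    Fin.append u v ∘ ordSum f f' = q := by
  rw [append_comp_ordSum, hu, hv]
  exact Fin.append_castAdd_natAdd

theorem ordSum_surjective (hf : Surjective f) (hf' : Surjective f') : Surjective (ordSum f f') := by
  intro t
  induction t using Fin.addCases with
  | left i => obtain ⟨x, rfl⟩ := hf i; exact ⟨_, ordSum_castAdd f f' x⟩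
  | right j => obtain ⟨x, rfl⟩ := hf' j; exact ⟨_, ordSum_natAdd f f' x⟩

end ordSum

theorem SLinPushout.exists_monotone_desc {m a b n : ℕ} {f : Fin m → Fin a} {g : Fin m → Fin b}
    {p₀ : Fin a → Fin n} {p₁ : Fin b → Fin n} (hpo : SLinPushout f g p₀ p₁)
    (hfs : Surjective f) (hgs : Surjective g) {β : Type*} [LinearOrder β]
    {q₀ : Fin a → β} {q₁ : Fin b → β} (hq₀ : Monotone q₀) (hq₁ : Monotone q₁)
    (hq : q₀ ∘ f = q₁ ∘ g) :
    ∃ h : Fin n → β, Monotone h ∧ h ∘ p₀ = q₀ ∧ h ∘ p₁ = q₁ := by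
  classical
  set s := Finset.univ.image q₀
  have hq₀s : ∀ x, q₀ x ∈ s := fun x => Finset.mem_image_of_mem q₀ (Finset.mem_univ x)
  have hq₁s : ∀ y, q₁ y ∈ s := fun y => by
    obtain ⟨z, rfl⟩ := hgs y
    rw [← comp_apply (f := q₁), ← hq]
    exact hq₀s (f z)
  let e := s.orderIsoOfFin rfl
  let r₀ : Fin a → Fin s.card := fun x => e.symm ⟨q₀ x, hq₀s x⟩
  let r₁ : Fin b → Fin s.card := fun y => e.symm ⟨q₁ y, hq₁s y⟩
  have hr₀m : Monotone r₀ := e.symm.monotone.comp fun _ _ hxy => hq₀ hxy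
  have hr₁m : Monotone r₁ := e.symm.monotone.comp fun _ _ hxy => hq₁ hxy
  have hr₀s : Surjective r₀ := by
    intro t
    obtain ⟨x, -, hx⟩ := Finset.mem_image.mp (e t).2
    exact ⟨x, e.symm_apply_eq.mpr (Subtype.ext hx)⟩
  have hr₁s : Surjective r₁ := by
    intro t
    obtain ⟨t, rfl⟩ := hr₀s t
    obtain ⟨z, rfl⟩ := hfs t
    exact ⟨g z, congrArg e.symm (Subtype.ext (congrFun hq z).symm)⟩
  have hr : r₀ ∘ f = r₁ ∘ g := funext fun z => congrArg e.symm (Subtype.ext (congrFun hq z))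
  obtain ⟨h, ⟨⟨hm, -⟩, h₀, h₁⟩, -⟩ := hpo _ r₀ r₁ hr₀m hr₀s hr₁m hr₁s hr
  refine ⟨fun x => e (h x), fun _ _ hxy => e.monotone (hm hxy), ?_, ?_⟩
  · funext x
    simp [show h (p₀ x) = r₀ x from congrFun h₀ x, r₀]
  · funext y
    simp [show h (p₁ y) = r₁ y from congrFun h₁ y, r₁]

theorem slin_pushout_ordSum_general {m a b n m' a' b' n' : ℕ}
    (f : Fin m → Fin a) (g : Fin m → Fin b)
    (p₀ : Fin a → Fin n) (p₁ : Fin b → Fin n)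
    (f' : Fin m' → Fin a') (g' : Fin m' → Fin b')
    (p₀' : Fin a' → Fin n') (p₁' : Fin b' → Fin n')
    (hfs : Function.Surjective f)
    (hgs : Function.Surjective g)
    (hp₀s : Function.Surjective p₀)
    (hfs' : Function.Surjective f')
    (hgs' : Function.Surjective g')
    (hp₀s' : Function.Surjective p₀')
    (hcomm : p₀ ∘ f = p₁ ∘ g) (hcomm' : p₀' ∘ f' = p₁' ∘ g')
    (hpo : SLinPushout f g p₀ p₁) (hpo' : SLinPushout f' g' p₀' p₁') :
    (ordSum p₀ p₀') ∘ (ordSum f f') = (ordSum p₁ p₁') ∘ (ordSum g g') ∧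
    SLinPushout (ordSum f f') (ordSum g g') (ordSum p₀ p₀') (ordSum p₁ p₁') := by
  refine ⟨by rw [ordSum_comp, ordSum_comp, hcomm, hcomm'], ?_⟩
  intro k q₀ q₁ hq₀m hq₀s hq₁m hq₁s hq
  have hq_left : (q₀ ∘ Fin.castAdd a') ∘ f = (q₁ ∘ Fin.castAdd b') ∘ g :=
    funext fun z => by simpa using congrFun hq (Fin.castAdd m' z)
  have hq_right : (q₀ ∘ Fin.natAdd a) ∘ f' = (q₁ ∘ Fin.natAdd b) ∘ g' :=
    funext fun z => by simpa using congrFun hq (Fin.natAdd m z)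
  obtain ⟨h₀, hh₀m, hh₀p₀, hh₀p₁⟩ := hpo.exists_monotone_desc hfs hgs
    (hq₀m.comp (Fin.strictMono_castAdd _).monotone) (hq₁m.comp (Fin.strictMono_castAdd _).monotone)
    hq_left
  obtain ⟨h₁, hh₁m, hh₁p₀, hh₁p₁⟩ := hpo'.exists_monotone_desc hfs' hgs'
    (hq₀m.comp (Fin.strictMono_natAdd _).monotone) (hq₁m.comp (Fin.strictMono_natAdd _).monotone)
    hq_right
  have hp₀ : Fin.append h₀ h₁ ∘ ordSum p₀ p₀' = q₀ := append_comp_ordSum_eq hh₀p₀ hh₁p₀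
  have hp₁ : Fin.append h₀ h₁ ∘ ordSum p₁ p₁' = q₁ := append_comp_ordSum_eq hh₀p₁ hh₁p₁
  have h₀_le_h₁ : ∀ i j, h₀ i ≤ h₁ j := by
    intro i j
    obtain ⟨x, rfl⟩ := hp₀s i
    obtain ⟨y, rfl⟩ := hp₀s' j
    exact (congrFun hh₀p₀ x).trans_le
      ((hq₀m (Fin.castAdd_le_natAdd x y)).trans_eq (congrFun hh₁p₀ y).symm)
  refine ⟨Fin.append h₀ h₁, ⟨⟨Fin.monotone_append hh₀m hh₁m h₀_le_h₁, ?_⟩, hp₀, hp₁⟩, ?_⟩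
  · exact Surjective.of_comp (hp₀ ▸ hq₀s)
  · rintro h ⟨-, hhp₀, -⟩
    exact (ordSum_surjective hp₀s hp₀s').injective_comp_right (hhp₀.trans hp₀.symm)

/-- pushouts interact with ordinal sum in `sLin`: the ordinal sum of
two pushout squares of monotone surjections is again a pushout square. -/
theorem slin_pushout_ordSum {m a b n m' a' b' n' : ℕ}
    (f : Fin m → Fin a) (g : Fin m → Fin b)
    (p₀ : Fin a → Fin n) (p₁ : Fin b → Fin n)
    (f' : Fin m' → Fin a') (g' : Fin m' → Fin b')
    (p₀' : Fin a' → Fin n') (p₁' : Fin b' → Fin n')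
    (hfm : Monotone f) (hfs : Function.Surjective f)
    (hgm : Monotone g) (hgs : Function.Surjective g)
    (hp₀m : Monotone p₀) (hp₀s : Function.Surjective p₀)
    (hp₁m : Monotone p₁) (hp₁s : Function.Surjective p₁)
    (hfm' : Monotone f') (hfs' : Function.Surjective f')
    (hgm' : Monotone g') (hgs' : Function.Surjective g')
    (hp₀m' : Monotone p₀') (hp₀s' : Function.Surjective p₀')
    (hp₁m' : Monotone p₁') (hp₁s' : Function.Surjective p₁')
    (hcomm : p₀ ∘ f = p₁ ∘ g) (hcomm' : p₀' ∘ f' = p₁' ∘ g')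
    (hpo : SLinPushout f g p₀ p₁) (hpo' : SLinPushout f' g' p₀' p₁') :
    (ordSum p₀ p₀') ∘ (ordSum f f') = (ordSum p₁ p₁') ∘ (ordSum g g') ∧
    SLinPushout (ordSum f f') (ordSum g g') (ordSum p₀ p₀') (ordSum p₁ p₁') :=
  slin_pushout_ordSum_general f g p₀ p₁ f' g' p₀' p₁' hfs hgs hp₀s hfs' hgs' hp₀s' hcomm hcomm' hpo
    hpo'
end

section
/- Let f : Fin a → Fin m and g : Fin b → Fin m be monotone injective functions. Then there exists exactly one triple (n, q₀, q₁) with n : ℕ and q₀ : Fin n → Fin a, q₁ : Fin n → Fin b monotone injective, such that f ∘ q₀ = g ∘ q₁ and the square is a pullback in iLin, i.e. for every k : ℕ and monotone injective r₀ : Fin k → Fin a, r₁ : Fin k → Fin b with f ∘ r₀ = g ∘ r₁ there exists a unique monotone injective h : Fin k → Fin n with q₀ ∘ h = r₀ and q₁ ∘ h = r₁. (iLin has strict pullbacks.) -/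
def ILinPullback {n a b m : ℕ} (q₀ : Fin n → Fin a) (q₁ : Fin n → Fin b)
    (f : Fin a → Fin m) (g : Fin b → Fin m) : Prop :=
  ∀ (k : ℕ) (r₀ : Fin k → Fin a) (r₁ : Fin k → Fin b),
    Monotone r₀ → Function.Injective r₀ → Monotone r₁ → Function.Injective r₁ →
    f ∘ r₀ = g ∘ r₁ →
    ∃! h : Fin k → Fin n,
      (Monotone h ∧ Function.Injective h) ∧ q₀ ∘ h = r₀ ∧ q₁ ∘ h = r₁

/-- `iLin` has strict pullbacks: every cospan of monotone injections
has exactly one pullback cone. -/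
theorem ilin_has_strict_pullbacks {a b m : ℕ}
    (f : Fin a → Fin m) (g : Fin b → Fin m)
    (hfm : Monotone f) (hfi : Function.Injective f)
    (hgm : Monotone g) (hgi : Function.Injective g) :
    ∃! t : Σ n : ℕ, (Fin n → Fin a) × (Fin n → Fin b),
      Monotone t.2.1 ∧ Function.Injective t.2.1 ∧
      Monotone t.2.2 ∧ Function.Injective t.2.2 ∧
      f ∘ t.2.1 = g ∘ t.2.2 ∧ ILinPullback t.2.1 t.2.2 f g := by
  classical
  have hfs : StrictMono f := hfm.strictMono_of_injective hfi
  have hgs : StrictMono g := hgm.strictMono_of_injective hgi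
  set S : Finset (Fin a) := Finset.univ.filter (fun i => ∃ j, g j = f i) with hS
  set e : Fin S.card ≃o {x // x ∈ S} := S.orderIsoOfFin rfl with he
  set q₀ : Fin S.card → Fin a := fun i => (e i : Fin a) with hq₀def
  have hq₀mem : ∀ i, ∃ j, g j = f (q₀ i) := by
    intro i
    have := (e i).2
    exact (Finset.mem_filter.mp this).2
  set q₁ : Fin S.card → Fin b := fun i => (hq₀mem i).choose with hq₁def
  have hq₁ : ∀ i, g (q₁ i) = f (q₀ i) := fun i => (hq₀mem i).choose_spec
  have hq₀s : StrictMono q₀ := fun i j hij => by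
    simpa [hq₀def] using (e.lt_iff_lt.mpr hij : e i < e j)
  have hq₀m : Monotone q₀ := hq₀s.monotone
  have hq₀i : Function.Injective q₀ := hq₀s.injective
  have hq₁s : StrictMono q₁ := fun i j hij => by
    have : g (q₁ i) < g (q₁ j) := by rw [hq₁, hq₁]; exact hfs (hq₀s hij)
    exact hgs.lt_iff_lt.mp this
  have hcomm : f ∘ q₀ = g ∘ q₁ := funext fun i => (hq₁ i).symm
  have hpb : ILinPullback q₀ q₁ f g := by
    intro k r₀ r₁ hr₀m hr₀i hr₁m hr₁i hfr
    have hmem : ∀ x, r₀ x ∈ S := by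
      intro x
      rw [hS, Finset.mem_filter]
      exact ⟨Finset.mem_univ _, ⟨r₁ x, (congrFun hfr x).symm⟩⟩
    refine ⟨fun x => e.symm ⟨r₀ x, hmem x⟩, ⟨⟨?_, ?_⟩, ?_, ?_⟩, ?_⟩
    · intro x y hxy
      exact e.symm.monotone (Subtype.mk_le_mk.mpr (hr₀m hxy))
    · intro x y hxy
      have := congrArg e hxy
      simp only [OrderIso.apply_symm_apply, Subtype.mk.injEq] at this
      exact hr₀i this
    · funext x
      simp [hq₀def]
    · funext x
      apply hgi
      simp only [Function.comp_apply]
      rw [hq₁]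
      have : q₀ (e.symm ⟨r₀ x, hmem x⟩) = r₀ x := by simp [hq₀def]
      rw [this]
      exact congrFun hfr x
    · intro h' ⟨_, hh0, _⟩
      funext x
      apply hq₀i
      have : q₀ (h' x) = r₀ x := congrFun hh0 x
      rw [this]
      simp [hq₀def]
  refine ⟨⟨S.card, q₀, q₁⟩, ⟨hq₀m, hq₀i, hq₁s.monotone, hq₁s.injective, hcomm, hpb⟩, ?_⟩
  rintro ⟨n', q₀', q₁'⟩ ⟨hm0, hi0, hm1, hi1, hcomm', hpb'⟩
  obtain ⟨h, ⟨⟨hhm, hhi⟩, hh0, hh1⟩, _⟩ := hpb n' q₀' q₁' hm0 hi0 hm1 hi1 hcomm'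
  obtain ⟨h', ⟨⟨hh'm, hh'i⟩, hh'0, hh'1⟩, _⟩ :=
    hpb' S.card q₀ q₁ hq₀m hq₀i hq₁s.monotone hq₁s.injective hcomm
  have e1 : h ∘ h' = id := by
    obtain ⟨w, _, hw⟩ := hpb S.card q₀ q₁ hq₀m hq₀i hq₁s.monotone hq₁s.injective hcomm
    have h1 := hw (h ∘ h') ⟨⟨hhm.comp hh'm, hhi.comp hh'i⟩,
      by rw [← Function.comp_assoc, hh0, hh'0], by rw [← Function.comp_assoc, hh1, hh'1]⟩
    have h2 := hw id ⟨⟨monotone_id, Function.injective_id⟩, rfl, rfl⟩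
    rw [h1, h2]
  have e2 : h' ∘ h = id := by
    obtain ⟨w, _, hw⟩ := hpb' n' q₀' q₁' hm0 hi0 hm1 hi1 hcomm'
    have h1 := hw (h' ∘ h) ⟨⟨hh'm.comp hhm, hh'i.comp hhi⟩,
      by rw [← Function.comp_assoc, hh'0, hh0], by rw [← Function.comp_assoc, hh'1, hh1]⟩
    have h2 := hw id ⟨⟨monotone_id, Function.injective_id⟩, rfl, rfl⟩
    rw [h1, h2]
  have hn : n' = S.card := by
    simpa using Fintype.card_congr (⟨h, h', congrFun e2, congrFun e1⟩ : Fin n' ≃ Fin S.card)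
  subst hn
  have hhs : StrictMono h := hhm.strictMono_of_injective hhi
  have hiso : (⟨⟨h, h', congrFun e2, congrFun e1⟩, fun {i j} => hhs.le_iff_le⟩ :
      Fin S.card ≃o Fin S.card) = OrderIso.refl (Fin S.card) := Subsingleton.elim _ _
  have hid : h = id := by
    funext x
    exact congrArg (fun (φ : Fin S.card ≃o Fin S.card) => φ x) hiso
  rw [hid] at hh0 hh1
  simp only [Function.comp_id] at hh0 hh1
  simp [← hh0, ← hh1]
end

section
/- Pullbacks interact with ordinal sum in iLin: suppose the square of monotone injections q₀ : Fin n → Fin a, q₁ : Fin n → Fin b, f : Fin a → Fin m, g : Fin b → Fin m with f ∘ q₀ = g ∘ q₁ is a pullback in iLin, and likewise the square q₀' : Fin n' → Fin a', q₁' : Fin n' → Fin b', f' : Fin a' → Fin m', g' : Fin b' → Fin m' with f' ∘ q₀' = g' ∘ q₁' is a pullback in iLin. Then the square formed by the ordinal sums q₀ + q₀', q₁ + q₁', f + f', g + g' (which satisfies (f + f') ∘ (q₀ + q₀') = (g + g') ∘ (q₁ + q₁')) is again a pullback in iLin. -/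
theorem ordSum_val_lt {m n m' n' : ℕ} (f : Fin m → Fin n) (f' : Fin m' → Fin n')
    (i : Fin (m + m')) (h : (i : ℕ) < m) :
    (ordSum f f' i : ℕ) = (f ⟨i, h⟩ : ℕ) := by
  unfold ordSum; rw [dif_pos h]; rfl

theorem ordSum_val_ge {m n m' n' : ℕ} (f : Fin m → Fin n) (f' : Fin m' → Fin n')
    (i : Fin (m + m')) (h : ¬ (i : ℕ) < m) :
    (ordSum f f' i : ℕ) = n + (f' ⟨(i : ℕ) - m, by have := i.isLt; omega⟩ : ℕ) := by
  unfold ordSum; rw [dif_neg h]; rfl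

theorem appc {N P : ℕ} (u : Fin N → Fin P) {x y : ℕ} (hx : x < N) (hy : y < N)
    (h : x = y) : (u ⟨x, hx⟩ : ℕ) = (u ⟨y, hy⟩ : ℕ) := by subst h; rfl

/-- pullbacks interact with ordinal sum in `iLin`: the ordinal sum of
two pullback squares of monotone injections is again a pullback square. -/
theorem ilin_pullback_ordSum {n a b m n' a' b' m' : ℕ}
    (q₀ : Fin n → Fin a) (q₁ : Fin n → Fin b)
    (f : Fin a → Fin m) (g : Fin b → Fin m)
    (q₀' : Fin n' → Fin a') (q₁' : Fin n' → Fin b')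
    (f' : Fin a' → Fin m') (g' : Fin b' → Fin m')
    (hq₀m : Monotone q₀) (hq₀i : Function.Injective q₀)
    (hq₁m : Monotone q₁) (hq₁i : Function.Injective q₁)
    (hfm : Monotone f) (hfi : Function.Injective f)
    (hgm : Monotone g) (hgi : Function.Injective g)
    (hq₀m' : Monotone q₀') (hq₀i' : Function.Injective q₀')
    (hq₁m' : Monotone q₁') (hq₁i' : Function.Injective q₁')
    (hfm' : Monotone f') (hfi' : Function.Injective f')
    (hgm' : Monotone g') (hgi' : Function.Injective g')
    (hcomm : f ∘ q₀ = g ∘ q₁) (hcomm' : f' ∘ q₀' = g' ∘ q₁')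
    (hpb : ILinPullback q₀ q₁ f g) (hpb' : ILinPullback q₀' q₁' f' g') :
    (ordSum f f') ∘ (ordSum q₀ q₀') = (ordSum g g') ∘ (ordSum q₁ q₁') ∧
    ILinPullback (ordSum q₀ q₀') (ordSum q₁ q₁') (ordSum f f') (ordSum g g') := by
  have hc : ∀ i : Fin n, f (q₀ i) = g (q₁ i) := fun i => congrFun hcomm i
  have hc' : ∀ i : Fin n', f' (q₀' i) = g' (q₁' i) := fun i => congrFun hcomm' i
  constructor
  · funext i
    apply Fin.ext
    simp only [Function.comp_apply]
    by_cases hi : (i : ℕ) < n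
    · have h₀ : ((ordSum q₀ q₀' i : Fin (a + a')) : ℕ) = (q₀ ⟨i, hi⟩ : ℕ) :=
        ordSum_val_lt _ _ _ hi
      have h₁ : ((ordSum q₁ q₁' i : Fin (b + b')) : ℕ) = (q₁ ⟨i, hi⟩ : ℕ) :=
        ordSum_val_lt _ _ _ hi
      have ha : ((ordSum q₀ q₀' i : Fin (a + a')) : ℕ) < a := by
        rw [h₀]; exact (q₀ ⟨i, hi⟩).isLt
      have hb : ((ordSum q₁ q₁' i : Fin (b + b')) : ℕ) < b := by
        rw [h₁]; exact (q₁ ⟨i, hi⟩).isLt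
      rw [ordSum_val_lt f f' _ ha, ordSum_val_lt g g' _ hb]
      calc (f ⟨_, ha⟩ : ℕ) = (f (q₀ ⟨i, hi⟩) : ℕ) := appc f ha (q₀ ⟨i, hi⟩).isLt h₀
        _ = (g (q₁ ⟨i, hi⟩) : ℕ) := by rw [hc ⟨i, hi⟩]
        _ = (g ⟨_, hb⟩ : ℕ) := (appc g hb (q₁ ⟨i, hi⟩).isLt h₁).symm
    · have h₀ : ((ordSum q₀ q₀' i : Fin (a + a')) : ℕ)
          = a + (q₀' ⟨(i : ℕ) - n, by have := i.isLt; omega⟩ : ℕ) :=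
        ordSum_val_ge _ _ _ hi
      have h₁ : ((ordSum q₁ q₁' i : Fin (b + b')) : ℕ)
          = b + (q₁' ⟨(i : ℕ) - n, by have := i.isLt; omega⟩ : ℕ) :=
        ordSum_val_ge _ _ _ hi
      have ha : ¬ ((ordSum q₀ q₀' i : Fin (a + a')) : ℕ) < a := by rw [h₀]; omega
      have hb : ¬ ((ordSum q₁ q₁' i : Fin (b + b')) : ℕ) < b := by rw [h₁]; omega
      rw [ordSum_val_ge f f' _ ha, ordSum_val_ge g g' _ hb]
      have e₀ : ((ordSum q₀ q₀' i : Fin (a + a')) : ℕ) - a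
          = (q₀' ⟨(i : ℕ) - n, by have := i.isLt; omega⟩ : ℕ) := by omega
      have e₁ : ((ordSum q₁ q₁' i : Fin (b + b')) : ℕ) - b
          = (q₁' ⟨(i : ℕ) - n, by have := i.isLt; omega⟩ : ℕ) := by omega
      have hval : (f' (q₀' ⟨(i : ℕ) - n, by have := i.isLt; omega⟩) : ℕ)
          = (g' (q₁' ⟨(i : ℕ) - n, by have := i.isLt; omega⟩) : ℕ) :=
        congrArg Fin.val (hc' ⟨(i : ℕ) - n, by have := i.isLt; omega⟩)
      exact congrArg₂ HAdd.hAdd rfl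
        ((appc f' (by have := (ordSum q₀ q₀' i).isLt; omega)
            (q₀' ⟨(i : ℕ) - n, by have := i.isLt; omega⟩).isLt e₀).trans
          (hval.trans (appc g' (by have := (ordSum q₁ q₁' i).isLt; omega)
            (q₁' ⟨(i : ℕ) - n, by have := i.isLt; omega⟩).isLt e₁).symm))
  · intro k r₀ r₁ hr₀m hr₀i hr₁m hr₁i hrc
    have hrc2 : ∀ i : Fin k, ordSum f f' (r₀ i) = ordSum g g' (r₁ i) :=
      fun i => congrFun hrc i
    have hblock : ∀ i : Fin k, ((r₀ i : ℕ) < a ↔ (r₁ i : ℕ) < b) := by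
      intro i
      have hv : (ordSum f f' (r₀ i) : ℕ) = (ordSum g g' (r₁ i) : ℕ) := by rw [hrc2 i]
      constructor
      · intro h0
        by_contra h1
        rw [ordSum_val_lt f f' _ h0, ordSum_val_ge g g' _ h1] at hv
        have := (f ⟨(r₀ i : ℕ), h0⟩).isLt
        omega
      · intro h1
        by_contra h0
        rw [ordSum_val_ge f f' _ h0, ordSum_val_lt g g' _ h1] at hv
        have := (g ⟨(r₁ i : ℕ), h1⟩).isLt
        omega
    have hex : ∃ s, s ≤ k ∧ (∀ i : Fin k, (i : ℕ) < s → (r₀ i : ℕ) < a) ∧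
        (∀ i : Fin k, s ≤ (i : ℕ) → ¬ (r₀ i : ℕ) < a) := by
      classical
      have hP : ∃ j, j = k ∨ ∃ hj : j < k, ¬ (r₀ ⟨j, hj⟩ : ℕ) < a := ⟨k, Or.inl rfl⟩
      refine ⟨Nat.find hP, ?_, ?_, ?_⟩
      · rcases Nat.find_spec hP with h | ⟨hj, _⟩
        · omega
        · omega
      · intro i hi
        by_contra hcon
        exact Nat.find_min hP hi (Or.inr ⟨i.isLt, hcon⟩)
      · intro i hi hlt
        rcases Nat.find_spec hP with h | ⟨hj, hna⟩
        · have := i.isLt; omega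
        · have hmono : r₀ ⟨Nat.find hP, hj⟩ ≤ r₀ i := hr₀m hi
          have : (r₀ ⟨Nat.find hP, hj⟩ : ℕ) ≤ (r₀ i : ℕ) := hmono
          exact hna (by omega)
    obtain ⟨s, hsk, hlow, hhigh⟩ := hex
    obtain ⟨t, hkst⟩ : ∃ t, k = s + t := ⟨k - s, by omega⟩
    obtain ⟨E, hEv⟩ : ∃ u : Fin s → Fin k, ∀ i, (u i : ℕ) = (i : ℕ) :=
      ⟨fun i => ⟨i, by have := i.isLt; omega⟩, fun _ => rfl⟩
    obtain ⟨F, hFv⟩ : ∃ u : Fin t → Fin k, ∀ j, (u j : ℕ) = s + (j : ℕ) :=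
      ⟨fun j => ⟨s + j, by have := j.isLt; omega⟩, fun _ => rfl⟩
    have hlowE : ∀ i : Fin s, (r₀ (E i) : ℕ) < a := fun i =>
      hlow (E i) (by rw [hEv]; exact i.isLt)
    have hlowE' : ∀ i : Fin s, (r₁ (E i) : ℕ) < b := fun i => (hblock (E i)).1 (hlowE i)
    have hhigh1 : ∀ j : Fin t, ¬ (r₀ (F j) : ℕ) < a := fun j =>
      hhigh (F j) (by rw [hFv]; omega)
    have hhigh1' : ∀ j : Fin t, ¬ (r₁ (F j) : ℕ) < b := fun j hh =>
      hhigh1 j ((hblock (F j)).2 hh)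
    obtain ⟨r₀L, hr₀Lv⟩ : ∃ u : Fin s → Fin a, ∀ i, (u i : ℕ) = (r₀ (E i) : ℕ) :=
      ⟨fun i => ⟨(r₀ (E i) : ℕ), hlowE i⟩, fun _ => rfl⟩
    obtain ⟨r₁L, hr₁Lv⟩ : ∃ u : Fin s → Fin b, ∀ i, (u i : ℕ) = (r₁ (E i) : ℕ) :=
      ⟨fun i => ⟨(r₁ (E i) : ℕ), hlowE' i⟩, fun _ => rfl⟩
    obtain ⟨r₀R, hr₀Rv⟩ : ∃ u : Fin t → Fin a', ∀ j, (u j : ℕ) = (r₀ (F j) : ℕ) - a :=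
      ⟨fun j => ⟨(r₀ (F j) : ℕ) - a,
        by have := (r₀ (F j)).isLt; have := hhigh1 j; omega⟩, fun _ => rfl⟩
    obtain ⟨r₁R, hr₁Rv⟩ : ∃ u : Fin t → Fin b', ∀ j, (u j : ℕ) = (r₁ (F j) : ℕ) - b :=
      ⟨fun j => ⟨(r₁ (F j) : ℕ) - b,
        by have := (r₁ (F j)).isLt; have := hhigh1' j; omega⟩, fun _ => rfl⟩
    have hEle : ∀ i j : Fin s, i ≤ j → E i ≤ E j := by
      intro i j hij
      rw [Fin.le_def, hEv, hEv]
      exact hij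
    have hFle : ∀ i j : Fin t, i ≤ j → F i ≤ F j := by
      intro i j hij
      rw [Fin.le_def, hFv, hFv]
      have : (i : ℕ) ≤ (j : ℕ) := hij
      omega
    have hr₀Lm : Monotone r₀L := by
      intro i j hij
      rw [Fin.le_def, hr₀Lv, hr₀Lv]
      exact Fin.le_def.mp (hr₀m (hEle i j hij))
    have hr₁Lm : Monotone r₁L := by
      intro i j hij
      rw [Fin.le_def, hr₁Lv, hr₁Lv]
      exact Fin.le_def.mp (hr₁m (hEle i j hij))
    have hr₀Li : Function.Injective r₀L := by
      intro i j hij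
      have h1 : (r₀L i : ℕ) = (r₀L j : ℕ) := congrArg Fin.val hij
      rw [hr₀Lv, hr₀Lv] at h1
      have h3 : (E i : ℕ) = (E j : ℕ) := congrArg Fin.val (hr₀i (Fin.ext h1))
      rw [hEv, hEv] at h3
      exact Fin.ext h3
    have hr₁Li : Function.Injective r₁L := by
      intro i j hij
      have h1 : (r₁L i : ℕ) = (r₁L j : ℕ) := congrArg Fin.val hij
      rw [hr₁Lv, hr₁Lv] at h1
      have h3 : (E i : ℕ) = (E j : ℕ) := congrArg Fin.val (hr₁i (Fin.ext h1))
      rw [hEv, hEv] at h3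
      exact Fin.ext h3
    have hr₀Rm : Monotone r₀R := by
      intro i j hij
      rw [Fin.le_def, hr₀Rv, hr₀Rv]
      have h1 : (r₀ (F i) : ℕ) ≤ (r₀ (F j) : ℕ) := Fin.le_def.mp (hr₀m (hFle i j hij))
      omega
    have hr₁Rm : Monotone r₁R := by
      intro i j hij
      rw [Fin.le_def, hr₁Rv, hr₁Rv]
      have h1 : (r₁ (F i) : ℕ) ≤ (r₁ (F j) : ℕ) := Fin.le_def.mp (hr₁m (hFle i j hij))
      omega
    have hr₀Ri : Function.Injective r₀R := by
      intro i j hij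
      have h1 : (r₀R i : ℕ) = (r₀R j : ℕ) := congrArg Fin.val hij
      rw [hr₀Rv, hr₀Rv] at h1
      have h2 : r₀ (F i) = r₀ (F j) :=
        Fin.ext (by have := hhigh1 i; have := hhigh1 j; omega)
      have h3 : (F i : ℕ) = (F j : ℕ) := congrArg Fin.val (hr₀i h2)
      rw [hFv, hFv] at h3
      exact Fin.ext (by omega)
    have hr₁Ri : Function.Injective r₁R := by
      intro i j hij
      have h1 : (r₁R i : ℕ) = (r₁R j : ℕ) := congrArg Fin.val hij
      rw [hr₁Rv, hr₁Rv] at h1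
      have h2 : r₁ (F i) = r₁ (F j) :=
        Fin.ext (by have := hhigh1' i; have := hhigh1' j; omega)
      have h3 : (F i : ℕ) = (F j : ℕ) := congrArg Fin.val (hr₁i h2)
      rw [hFv, hFv] at h3
      exact Fin.ext (by omega)
    have hLcomm : f ∘ r₀L = g ∘ r₁L := by
      funext i
      apply Fin.ext
      simp only [Function.comp_apply]
      have hv : (ordSum f f' (r₀ (E i)) : ℕ) = (ordSum g g' (r₁ (E i)) : ℕ) := by
        rw [hrc2 (E i)]
      rw [ordSum_val_lt f f' _ (hlowE i), ordSum_val_lt g g' _ (hlowE' i)] at hv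
      have e0 : (⟨(r₀ (E i) : ℕ), hlowE i⟩ : Fin a) = r₀L i := (Fin.ext (hr₀Lv i)).symm
      have e1 : (⟨(r₁ (E i) : ℕ), hlowE' i⟩ : Fin b) = r₁L i := (Fin.ext (hr₁Lv i)).symm
      rw [e0, e1] at hv
      exact hv
    have hRcomm : f' ∘ r₀R = g' ∘ r₁R := by
      funext j
      apply Fin.ext
      simp only [Function.comp_apply]
      have hv : (ordSum f f' (r₀ (F j)) : ℕ) = (ordSum g g' (r₁ (F j)) : ℕ) := by
        rw [hrc2 (F j)]
      rw [ordSum_val_ge f f' _ (hhigh1 j), ordSum_val_ge g g' _ (hhigh1' j)] at hv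
      have e0 : (⟨(r₀ (F j) : ℕ) - a,
          by have := (r₀ (F j)).isLt; have := hhigh1 j; omega⟩ : Fin a') = r₀R j :=
        (Fin.ext (hr₀Rv j)).symm
      have e1 : (⟨(r₁ (F j) : ℕ) - b,
          by have := (r₁ (F j)).isLt; have := hhigh1' j; omega⟩ : Fin b') = r₁R j :=
        (Fin.ext (hr₁Rv j)).symm
      rw [e0, e1] at hv
      omega
    obtain ⟨hL, ⟨⟨hLm, hLi⟩, hL0, hL1⟩, hLu⟩ :=
      hpb s r₀L r₁L hr₀Lm hr₀Li hr₁Lm hr₁Li hLcomm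
    obtain ⟨hR, ⟨⟨hRm, hRi⟩, hR0, hR1⟩, hRu⟩ :=
      hpb' t r₀R r₁R hr₀Rm hr₀Ri hr₁Rm hr₁Ri hRcomm
    obtain ⟨H, hHE, hHF⟩ : ∃ u : Fin k → Fin (n + n'),
        (∀ i : Fin s, (u (E i) : ℕ) = (hL i : ℕ)) ∧
        (∀ j : Fin t, (u (F j) : ℕ) = n + (hR j : ℕ)) := by
      refine ⟨fun i => ordSum hL hR (Fin.cast hkst i), fun i => ?_, fun j => ?_⟩
      · have hv : ((Fin.cast hkst (E i) : Fin (s + t)) : ℕ) < s := by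
          rw [Fin.coe_cast, hEv]; exact i.isLt
        rw [ordSum_val_lt hL hR _ hv,
          appc hL hv i.isLt (by rw [Fin.coe_cast, hEv]), Fin.eta]
      · have hv : ¬ ((Fin.cast hkst (F j) : Fin (s + t)) : ℕ) < s := by
          rw [Fin.coe_cast, hFv]; omega
        rw [ordSum_val_ge hL hR _ hv,
          appc hR (by rw [Fin.coe_cast, hFv]; omega) j.isLt
            (by rw [Fin.coe_cast, hFv]; omega), Fin.eta]
    have hEsurj : ∀ (i : Fin k), (i : ℕ) < s → ∃ i' : Fin s, E i' = i := by
      intro i hi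
      exact ⟨⟨(i : ℕ), hi⟩, Fin.ext (hEv ⟨(i : ℕ), hi⟩)⟩
    have hFsurj : ∀ (i : Fin k), ¬ (i : ℕ) < s → ∃ j' : Fin t, F j' = i := by
      intro i hi
      refine ⟨⟨(i : ℕ) - s, by have := i.isLt; omega⟩, Fin.ext ?_⟩
      rw [hFv]
      simp only [Fin.val_mk]
      have := i.isLt
      omega
    refine ⟨H, ⟨⟨?_, ?_⟩, ?_, ?_⟩, ?_⟩
    · -- Monotone H
      intro i j hij
      have hijv : (i : ℕ) ≤ (j : ℕ) := Fin.le_def.mp hij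
      rw [Fin.le_def]
      by_cases hi : (i : ℕ) < s <;> by_cases hj : (j : ℕ) < s
      · obtain ⟨i', hi'⟩ := hEsurj i hi
        obtain ⟨j', hj'⟩ := hEsurj j hj
        rw [← hi', ← hj', hHE i', hHE j']
        have hiv := hEv i'; rw [hi'] at hiv
        have hjv := hEv j'; rw [hj'] at hjv
        exact Fin.le_def.mp (hLm (Fin.le_def.mpr (by omega)))
      · obtain ⟨i', hi'⟩ := hEsurj i hi
        obtain ⟨j', hj'⟩ := hFsurj j hj
        rw [← hi', ← hj', hHE i', hHF j']
        have := (hL i').isLt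
        omega
      · exact absurd hijv (by omega)
      · obtain ⟨i', hi'⟩ := hFsurj i hi
        obtain ⟨j', hj'⟩ := hFsurj j hj
        rw [← hi', ← hj', hHF i', hHF j']
        have hiv := hFv i'; rw [hi'] at hiv
        have hjv := hFv j'; rw [hj'] at hjv
        have h2 : (hR i' : ℕ) ≤ (hR j' : ℕ) :=
          Fin.le_def.mp (hRm (Fin.le_def.mpr (by omega)))
        omega
    · -- Injective H
      intro i j hij
      have hv : (H i : ℕ) = (H j : ℕ) := congrArg Fin.val hij
      apply Fin.ext
      by_cases hi : (i : ℕ) < s <;> by_cases hj : (j : ℕ) < s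
      · obtain ⟨i', hi'⟩ := hEsurj i hi
        obtain ⟨j', hj'⟩ := hEsurj j hj
        rw [← hi', ← hj'] at hv ⊢
        rw [hHE i', hHE j'] at hv
        have h2 : (i' : ℕ) = (j' : ℕ) := congrArg Fin.val (hLi (Fin.ext hv))
        rw [hEv, hEv]
        exact h2
      · obtain ⟨i', hi'⟩ := hEsurj i hi
        obtain ⟨j', hj'⟩ := hFsurj j hj
        rw [← hi', ← hj'] at hv
        rw [hHE i', hHF j'] at hv
        have := (hL i').isLt
        omega
      · obtain ⟨i', hi'⟩ := hFsurj i hi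
        obtain ⟨j', hj'⟩ := hEsurj j hj
        rw [← hi', ← hj'] at hv
        rw [hHF i', hHE j'] at hv
        have := (hL j').isLt
        omega
      · obtain ⟨i', hi'⟩ := hFsurj i hi
        obtain ⟨j', hj'⟩ := hFsurj j hj
        rw [← hi', ← hj'] at hv ⊢
        rw [hHF i', hHF j'] at hv
        have h2 : (i' : ℕ) = (j' : ℕ) := congrArg Fin.val (hRi (Fin.ext (by omega)))
        rw [hFv, hFv]
        omega
    · -- q₀-sum ∘ H = r₀
      funext i
      apply Fin.ext
      simp only [Function.comp_apply]
      by_cases hi : (i : ℕ) < s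
      · obtain ⟨i', hi'⟩ := hEsurj i hi
        rw [← hi']
        have h1 : (H (E i') : ℕ) < n := by rw [hHE i']; exact (hL i').isLt
        rw [ordSum_val_lt q₀ q₀' _ h1, appc q₀ h1 (hL i').isLt (hHE i'), Fin.eta]
        have h3 : (q₀ (hL i') : ℕ) = (r₀L i' : ℕ) := congrArg Fin.val (congrFun hL0 i')
        rw [h3, hr₀Lv i']
      · obtain ⟨j', hj'⟩ := hFsurj i hi
        rw [← hj']
        have h1 : ¬ (H (F j') : ℕ) < n := by rw [hHF j']; omega
        have h2 : (H (F j') : ℕ) - n = (hR j' : ℕ) := by rw [hHF j']; omega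
        rw [ordSum_val_ge q₀ q₀' _ h1,
          appc q₀' (by have := (H (F j')).isLt; omega) (hR j').isLt h2, Fin.eta]
        have h3 : (q₀' (hR j') : ℕ) = (r₀R j' : ℕ) := congrArg Fin.val (congrFun hR0 j')
        rw [h3, hr₀Rv j']
        have := hhigh1 j'
        have := (r₀ (F j')).isLt
        omega
    · -- q₁-sum ∘ H = r₁
      funext i
      apply Fin.ext
      simp only [Function.comp_apply]
      by_cases hi : (i : ℕ) < s
      · obtain ⟨i', hi'⟩ := hEsurj i hi
        rw [← hi']
        have h1 : (H (E i') : ℕ) < n := by rw [hHE i']; exact (hL i').isLt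
        rw [ordSum_val_lt q₁ q₁' _ h1, appc q₁ h1 (hL i').isLt (hHE i'), Fin.eta]
        have h3 : (q₁ (hL i') : ℕ) = (r₁L i' : ℕ) := congrArg Fin.val (congrFun hL1 i')
        rw [h3, hr₁Lv i']
      · obtain ⟨j', hj'⟩ := hFsurj i hi
        rw [← hj']
        have h1 : ¬ (H (F j') : ℕ) < n := by rw [hHF j']; omega
        have h2 : (H (F j') : ℕ) - n = (hR j' : ℕ) := by rw [hHF j']; omega
        rw [ordSum_val_ge q₁ q₁' _ h1,
          appc q₁' (by have := (H (F j')).isLt; omega) (hR j').isLt h2, Fin.eta]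
        have h3 : (q₁' (hR j') : ℕ) = (r₁R j' : ℕ) := congrArg Fin.val (congrFun hR1 j')
        rw [h3, hr₁Rv j']
        have := hhigh1' j'
        have := (r₁ (F j')).isLt
        omega
    · -- uniqueness
      intro H₂ hH₂
      obtain ⟨⟨h2m, h2i⟩, h20, h21⟩ := hH₂
      have h20v : ∀ i : Fin k, (ordSum q₀ q₀' (H₂ i) : ℕ) = (r₀ i : ℕ) :=
        fun i => congrArg Fin.val (congrFun h20 i)
      have h21v : ∀ i : Fin k, (ordSum q₁ q₁' (H₂ i) : ℕ) = (r₁ i : ℕ) :=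
        fun i => congrArg Fin.val (congrFun h21 i)
      have hblk : ∀ i : Fin k, ((i : ℕ) < s ↔ (H₂ i : ℕ) < n) := by
        intro i
        constructor
        · intro hi
          by_contra hn
          have hv := h20v i
          rw [ordSum_val_ge q₀ q₀' _ hn] at hv
          have := hlow i hi
          omega
        · intro hn
          by_contra hi
          have hv := h20v i
          rw [ordSum_val_lt q₀ q₀' _ hn] at hv
          have h3 := (q₀ ⟨(H₂ i : ℕ), hn⟩).isLt
          exact hhigh i (by omega) (by omega)
      have hblkE : ∀ i : Fin s, (H₂ (E i) : ℕ) < n := fun i =>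
        (hblk (E i)).1 (by rw [hEv]; exact i.isLt)
      have hblkF : ∀ j : Fin t, ¬ (H₂ (F j) : ℕ) < n := by
        intro j hn
        have h1 := (hblk (F j)).2 hn
        have h2 := hFv j
        omega
      obtain ⟨H₂L, h2Lv⟩ : ∃ u : Fin s → Fin n, ∀ i, (u i : ℕ) = (H₂ (E i) : ℕ) :=
        ⟨fun i => ⟨(H₂ (E i) : ℕ), hblkE i⟩, fun _ => rfl⟩
      obtain ⟨H₂R, h2Rv⟩ : ∃ u : Fin t → Fin n', ∀ j, (u j : ℕ) = (H₂ (F j) : ℕ) - n :=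
        ⟨fun j => ⟨(H₂ (F j) : ℕ) - n,
          by have := (H₂ (F j)).isLt; have := hblkF j; omega⟩, fun _ => rfl⟩
      have h2Lm : Monotone H₂L := by
        intro i j hij
        rw [Fin.le_def, h2Lv, h2Lv]
        exact Fin.le_def.mp (h2m (hEle i j hij))
      have h2Li : Function.Injective H₂L := by
        intro i j hij
        have h1 : (H₂L i : ℕ) = (H₂L j : ℕ) := congrArg Fin.val hij
        rw [h2Lv, h2Lv] at h1
        have h3 : (E i : ℕ) = (E j : ℕ) := congrArg Fin.val (h2i (Fin.ext h1))
        rw [hEv, hEv] at h3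
        exact Fin.ext h3
      have h2Rm : Monotone H₂R := by
        intro i j hij
        rw [Fin.le_def, h2Rv, h2Rv]
        have h1 : (H₂ (F i) : ℕ) ≤ (H₂ (F j) : ℕ) := Fin.le_def.mp (h2m (hFle i j hij))
        omega
      have h2Ri : Function.Injective H₂R := by
        intro i j hij
        have h1 : (H₂R i : ℕ) = (H₂R j : ℕ) := congrArg Fin.val hij
        rw [h2Rv, h2Rv] at h1
        have h2 : H₂ (F i) = H₂ (F j) :=
          Fin.ext (by have := hblkF i; have := hblkF j; omega)
        have h3 : (F i : ℕ) = (F j : ℕ) := congrArg Fin.val (h2i h2)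
        rw [hFv, hFv] at h3
        exact Fin.ext (by omega)
      have h2L0 : q₀ ∘ H₂L = r₀L := by
        funext i
        apply Fin.ext
        simp only [Function.comp_apply]
        have hv := h20v (E i)
        rw [ordSum_val_lt q₀ q₀' _ (hblkE i)] at hv
        have e0 : (⟨(H₂ (E i) : ℕ), hblkE i⟩ : Fin n) = H₂L i := (Fin.ext (h2Lv i)).symm
        rw [e0] at hv
        rw [hv, hr₀Lv i]
      have h2L1 : q₁ ∘ H₂L = r₁L := by
        funext i
        apply Fin.ext
        simp only [Function.comp_apply]
        have hv := h21v (E i)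
        rw [ordSum_val_lt q₁ q₁' _ (hblkE i)] at hv
        have e0 : (⟨(H₂ (E i) : ℕ), hblkE i⟩ : Fin n) = H₂L i := (Fin.ext (h2Lv i)).symm
        rw [e0] at hv
        rw [hv, hr₁Lv i]
      have h2R0 : q₀' ∘ H₂R = r₀R := by
        funext j
        apply Fin.ext
        simp only [Function.comp_apply]
        have hv := h20v (F j)
        rw [ordSum_val_ge q₀ q₀' _ (hblkF j)] at hv
        have e0 : (⟨(H₂ (F j) : ℕ) - n,
            by have := (H₂ (F j)).isLt; have := hblkF j; omega⟩ : Fin n') = H₂R j :=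
          (Fin.ext (h2Rv j)).symm
        rw [e0] at hv
        rw [hr₀Rv j]
        omega
      have h2R1 : q₁' ∘ H₂R = r₁R := by
        funext j
        apply Fin.ext
        simp only [Function.comp_apply]
        have hv := h21v (F j)
        rw [ordSum_val_ge q₁ q₁' _ (hblkF j)] at hv
        have e0 : (⟨(H₂ (F j) : ℕ) - n,
            by have := (H₂ (F j)).isLt; have := hblkF j; omega⟩ : Fin n') = H₂R j :=
          (Fin.ext (h2Rv j)).symm
        rw [e0] at hv
        rw [hr₁Rv j]
        omega
      have hLeq : H₂L = hL := hLu H₂L ⟨⟨h2Lm, h2Li⟩, h2L0, h2L1⟩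
      have hReq : H₂R = hR := hRu H₂R ⟨⟨h2Rm, h2Ri⟩, h2R0, h2R1⟩
      funext i
      apply Fin.ext
      by_cases hi : (i : ℕ) < s
      · obtain ⟨i', hi'⟩ := hEsurj i hi
        rw [← hi', hHE i', ← hLeq]
        exact (h2Lv i').symm
      · obtain ⟨j', hj'⟩ := hFsurj i hi
        rw [← hj', hHF j', ← hReq]
        have h1 := h2Rv j'
        have := hblkF j'
        omega
end

section
/- Let C and D be categories and let F₀ : C ⥤ D and F₁ : Cᵒᵖ ⥤ D be compatible functors. Let f₀ : X → A, f₁ : Y → A, g₀ : Y → B, g₁ : Z → B be morphisms of C, and let p₀ : A → P, p₁ : B → P satisfy f₁ ≫ p₀ = g₀ ≫ p₁ and form a pushout square of the span (f₁ : Y → A, g₀ : Y → B). Then F₀.map (f₀ ≫ p₀) ≫ F₁.map ((g₁ ≫ p₁)).op = F₀.map f₀ ≫ F₁.map f₁.op ≫ F₀.map g₀ ≫ F₁.map g₁.op (composites formed using the identifications from object-agreement). In other words, the assignment sending a cospan (f₀ : X → A ← Y : f₁) to F₀.map f₀ ≫ F₁.map f₁.op preserves composition of cospans, where composition of cospans is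 given by pushout. -/
open CategoryTheory

/-- Functors `F₀ : C ⥤ D` and `F₁ : Cᵒᵖ ⥤ D` are *compatible* if they coincide on
objects and, for every pushout square `α ≫ p₀ = β ≫ p₁` in `C`, the equation
`F₁.map α.op ≫ F₀.map β = F₀.map p₀ ≫ F₁.map p₁.op` holds (with the composites
formed via the `eqToHom`s coming from the object-agreement). -/
structure Compatible {C : Type*} {D : Type*} [Category C] [Category D]
    (F₀ : C ⥤ D) (F₁ : Cᵒᵖ ⥤ D) : Prop where
  obj_eq : ∀ X : C, F₀.obj X = F₁.obj (Opposite.op X)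
  square : ∀ {X A B P : C} (α : X ⟶ A) (β : X ⟶ B) (p₀ : A ⟶ P) (p₁ : B ⟶ P),
    IsPushout α β p₀ p₁ →
    eqToHom (obj_eq A) ≫ F₁.map α.op ≫ eqToHom (obj_eq X).symm ≫ F₀.map β =
      F₀.map p₀ ≫ eqToHom (obj_eq P) ≫ F₁.map p₁.op ≫ eqToHom (obj_eq B).symm

/-- for compatible functors `F₀`, `F₁`, the assignment sending a
cospan `(f₀ : X → A ← Y : f₁)` to `F₀.map f₀ ≫ F₁.map f₁.op` preserves composition
of cospans, where composition of cospans is computed by pushout. -/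
theorem compatible_preserves_cospan_comp {C D : Type*} [Category C] [Category D]
    (F₀ : C ⥤ D) (F₁ : Cᵒᵖ ⥤ D) (hc : Compatible F₀ F₁)
    {X A Y B Z P : C}
    (f₀ : X ⟶ A) (f₁ : Y ⟶ A) (g₀ : Y ⟶ B) (g₁ : Z ⟶ B)
    (p₀ : A ⟶ P) (p₁ : B ⟶ P)
    (hcomm : f₁ ≫ p₀ = g₀ ≫ p₁)
    (hpo : IsPushout f₁ g₀ p₀ p₁) :
    F₀.map (f₀ ≫ p₀) ≫ eqToHom (hc.obj_eq P) ≫ F₁.map (g₁ ≫ p₁).op ≫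
        eqToHom (hc.obj_eq Z).symm =
      F₀.map f₀ ≫ eqToHom (hc.obj_eq A) ≫ F₁.map f₁.op ≫ eqToHom (hc.obj_eq Y).symm ≫
        F₀.map g₀ ≫ eqToHom (hc.obj_eq B) ≫ F₁.map g₁.op ≫
        eqToHom (hc.obj_eq Z).symm := by
  have h := hc.square f₁ g₀ p₀ p₁ hpo
  simp only [Functor.map_comp, op_comp, Category.assoc]
  rw [reassoc_of% h]
  simp
end

section
/- Let ∇ : Fin 2 → Fin 1 be the unique function. The square whose span legs are ∇ : Fin 2 → Fin 1 and ∇ : Fin 2 → Fin 1 and whose cocone legs are the identity id : Fin 1 → Fin 1 and the identity id : Fin 1 → Fin 1 is a pushout in sLin. (This is the combinatorial content of the separability law Δ ; ∇ = id for the separable semialgebra (1+1, ∇, Δ) in the category of cospans of monotone surjections.) -/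
/-- The unique map `∇ : Fin 2 → Fin 1`. -/
def nabla : Fin 2 → Fin 1 := fun _ => 0

/-- the square with span legs `∇, ∇ : Fin 2 → Fin 1` and cocone legs
`id, id : Fin 1 → Fin 1` is a pushout in `sLin` (the separability law). -/
theorem slin_pushout_nabla_nabla :
    SLinPushout nabla nabla (id : Fin 1 → Fin 1) (id : Fin 1 → Fin 1) := by
  intro k q₀ q₁ hm₀ hs₀ hm₁ hs₁ hcomm
  have hq : q₁ = q₀ := by
    funext x
    obtain ⟨y, hy⟩ := hs₀ (q₁ x)
    have hx : x = 0 := Subsingleton.elim _ _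
    have hy0 : y = 0 := Subsingleton.elim _ _
    subst hx hy0; exact hy.symm
  refine ⟨q₀, ⟨⟨hm₀, hs₀⟩, rfl, by rw [hq]; rfl⟩, ?_⟩
  rintro h ⟨-, h0, -⟩
  exact h0
end

section
/- Let ∇ : Fin 2 → Fin 1 be the unique function and let 1 denote the identity of Fin 1, so that ∇ + 1 : Fin 3 → Fin 2 and 1 + ∇ : Fin 3 → Fin 2 are the monotone surjections identifying respectively the first two and the last two elements of Fin 3. Then both of the following squares are pushouts in sLin: (i) the square with span legs ∇ + 1 and 1 + ∇ (from Fin 3) and cocone legs ∇ and ∇ (into Fin 1); (ii) the square with span legs 1 + ∇ and ∇ + 1 (from Fin 3) and cocone legs ∇ and ∇ (into Fin 1). (These are the combinatorial content of the two Frobenius laws for the separable semialgebra (1+1, ∇, Δ) in the category of cospans of monotone surjections.) -/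
/-- `∇ + 1 : Fin 3 → Fin 2`, identifying the first two elements. -/
def nablaOne : Fin 3 → Fin 2 := ordSum nabla (id : Fin 1 → Fin 1)

/-- `1 + ∇ : Fin 3 → Fin 2`, identifying the last two elements. -/
def oneNabla : Fin 3 → Fin 2 := ordSum (id : Fin 1 → Fin 1) nabla

lemma slin_aux {k : ℕ} (q₀ q₁ : Fin 2 → Fin k)
    (hs₀ : Function.Surjective q₀)
    (e0 : q₀ 0 = q₁ 0) (e1 : q₀ 0 = q₁ 1) (e2 : q₀ 1 = q₁ 1) :
    ∃! h : Fin 1 → Fin k,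
      (Monotone h ∧ Function.Surjective h) ∧ h ∘ nabla = q₀ ∧ h ∘ nabla = q₁ := by
  have hq01 : q₀ 1 = q₀ 0 := by rw [e2, ← e1]
  have hconst₀ : ∀ x, q₀ x = q₀ 0 := by
    intro x; fin_cases x <;> simp [hq01]
  have hconst₁ : ∀ x, q₁ x = q₀ 0 := by
    intro x; fin_cases x <;> simp [← e0, ← e1]
  refine ⟨fun _ => q₀ 0, ⟨⟨monotone_const, ?_⟩, ?_, ?_⟩, ?_⟩
  · intro y
    obtain ⟨x, hx⟩ := hs₀ y
    exact ⟨0, by rw [← hx, hconst₀ x]⟩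
  · funext x; exact (hconst₀ x).symm
  · funext x; exact (hconst₁ x).symm
  · rintro h' ⟨-, hp₀, -⟩
    funext x
    have : h' (nabla 0) = q₀ 0 := congrFun hp₀ 0
    simpa [Subsingleton.elim x (0 : Fin 1), nabla] using this

/-- the two Frobenius squares are pushouts in `sLin`:
(i) span legs `∇ + 1` and `1 + ∇` with cocone legs `∇` and `∇`, and
(ii) span legs `1 + ∇` and `∇ + 1` with cocone legs `∇` and `∇`. -/
theorem slin_pushout_frobenius :
    SLinPushout nablaOne oneNabla nabla nabla ∧
    SLinPushout oneNabla nablaOne nabla nabla := by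
  constructor
  · intro k q₀ q₁ _ hs₀ _ _ hcomm
    exact slin_aux q₀ q₁ hs₀ (congrFun hcomm 0) (congrFun hcomm 1) (congrFun hcomm 2)
  · intro k q₀ q₁ _ hs₀ _ _ hcomm
    have e0 : q₀ 0 = q₁ 0 := congrFun hcomm 0
    have e1 : q₀ 1 = q₁ 0 := congrFun hcomm 1
    have e2 : q₀ 1 = q₁ 1 := congrFun hcomm 2
    exact slin_aux q₀ q₁ hs₀ e0 (e0.trans (e1.symm.trans e2)) (e2)
end

section
/- For n : ℕ and i : Fin (n+1), let σᵢ : Fin (n+2) → Fin (n+1) be the monotone surjection with σᵢ(j) = j for j ≤ i and σᵢ(j) = j − 1 for j > i. Then the square whose span legs are σᵢ : Fin (n+2) → Fin (n+1) and σᵢ : Fin (n+2) → Fin (n+1) and whose cocone legs are both the identity of Fin (n+1) is a pushout in sLin: the pushout of a degeneracy map along itself is given by identities. -/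
/-- The degeneracy `σᵢ : Fin (n+2) → Fin (n+1)`: for `i ≤ n`, it sends `j` to `j`
when `j ≤ i` and to `j - 1` when `j > i` (identifying `i` and `i+1`). -/
def sigmaMap (n : ℕ) (i : ℕ) : Fin (n + 2) → Fin (n + 1) := fun j =>
  if (j : ℕ) ≤ i then ⟨min (j : ℕ) n, by have := j.isLt; omega⟩
  else ⟨(j : ℕ) - 1, by have := j.isLt; omega⟩

lemma sigmaMap_surjective (n : ℕ) (i : Fin (n + 1)) :
    Function.Surjective (sigmaMap n i) := by
  intro y
  by_cases hy : (y : ℕ) ≤ (i : ℕ)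
  · refine ⟨⟨y, by omega⟩, ?_⟩
    simp only [sigmaMap, hy, if_pos]
    have := y.isLt
    exact Fin.ext (by simp; omega)
  · refine ⟨⟨(y : ℕ) + 1, by omega⟩, ?_⟩
    have : ¬ ((y : ℕ) + 1 ≤ (i : ℕ)) := by omega
    simp only [sigmaMap, this, if_neg, not_false_iff]
    exact Fin.ext (by simp)

/-- the pushout in `sLin` of a degeneracy map `σᵢ` along itself is
given by identities. -/
theorem slin_pushout_sigma_self (n : ℕ) (i : Fin (n + 1)) :
    SLinPushout (sigmaMap n i) (sigmaMap n i)
      (id : Fin (n + 1) → Fin (n + 1)) (id : Fin (n + 1) → Fin (n + 1)) := by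
  intro k q₀ q₁ hm₀ hs₀ hm₁ hs₁ hcomm
  have hq : q₀ = q₁ := by
    funext y
    obtain ⟨x, rfl⟩ := sigmaMap_surjective n i y
    exact congrFun hcomm x
  refine ⟨q₀, ⟨⟨hm₀, hs₀⟩, rfl, hq⟩, ?_⟩
  rintro h ⟨_, h₀, _⟩
  exact h₀
end

section
/- For n : ℕ and i with i + 1 ≤ n, consider the degeneracies σᵢ : Fin (n+2) → Fin (n+1) and σᵢ₊₁ : Fin (n+2) → Fin (n+1). Then σᵢ ∘ σᵢ = σᵢ ∘ σᵢ₊₁ as functions Fin (n+2) → Fin n, and the square whose span legs are σᵢ and σᵢ₊₁ (from Fin (n+2)) and whose cocone legs are σᵢ : Fin (n+1) → Fin n and σᵢ : Fin (n+1) → Fin n is a pushout in sLin: the pushout of two adjacent degeneracy maps is given by collapsing both. -/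
def secMap (n i : ℕ) : Fin (n+1) → Fin (n+2) := fun y =>
  if (y : ℕ) ≤ i then ⟨(y : ℕ), by have := y.isLt; omega⟩
  else ⟨(y : ℕ) + 1, by have := y.isLt; omega⟩

lemma sec_coe (n i : ℕ) (y : Fin (n+1)) :
    ((secMap n i y : Fin (n+2)) : ℕ) = if (y:ℕ) ≤ i then (y:ℕ) else (y:ℕ)+1 := by
  unfold secMap; split_ifs <;> rfl

lemma sig_coe (n i : ℕ) (j : Fin (n+2)) :
    ((sigmaMap n i j : Fin (n+1)) : ℕ) = if (j:ℕ) ≤ i then min (j:ℕ) n else (j:ℕ) - 1 := by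
  unfold sigmaMap; split_ifs <;> rfl

set_option maxHeartbeats 1000000 in
/-- the pushout in `sLin` of two adjacent degeneracies `σᵢ` and
`σᵢ₊₁` is given by collapsing both.  (Stated with the target `Fin n` of the
cocone legs written as `Fin (n+1)`, so the hypothesis `i + 1 ≤ n` becomes
`i + 1 ≤ n + 1`.) -/
theorem slin_pushout_sigma_adjacent (n i : ℕ) (hi : i + 1 ≤ n + 1) :
    (sigmaMap n i ∘ sigmaMap (n + 1) i = sigmaMap n i ∘ sigmaMap (n + 1) (i + 1)) ∧
    SLinPushout (sigmaMap (n + 1) i) (sigmaMap (n + 1) (i + 1))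
      (sigmaMap n i) (sigmaMap n i) := by
  have hin : i ≤ n := by omega
  constructor
  · funext j
    apply Fin.ext
    simp only [Function.comp_apply, sig_coe]
    have := j.isLt
    split_ifs <;> omega
  · intro k q₀ q₁ hq₀m hq₀s hq₁m hq₁s hsq
    have key : ∀ j : Fin (n+3), q₀ (sigmaMap (n+1) i j) = q₁ (sigmaMap (n+1) (i+1) j) :=
      fun j => congrFun hsq j
    -- q₀ = q₁
    have q01 : ∀ x : Fin (n+2), q₀ x = q₁ x := by
      intro x
      rcases le_or_gt (x:ℕ) i with h | h
      · have e1 : sigmaMap (n+1) i ⟨(x:ℕ), by omega⟩ = x := by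
          apply Fin.ext; rw [sig_coe]; have := x.isLt; simp only [Fin.val_mk]; split_ifs <;> omega
        have e2 : sigmaMap (n+1) (i+1) ⟨(x:ℕ), by omega⟩ = x := by
          apply Fin.ext; rw [sig_coe]; have := x.isLt; simp only [Fin.val_mk]; split_ifs <;> omega
        calc q₀ x = q₀ (sigmaMap (n+1) i ⟨(x:ℕ), by omega⟩) := (congrArg q₀ e1).symm
          _ = q₁ (sigmaMap (n+1) (i+1) ⟨(x:ℕ), by omega⟩) := key _
          _ = q₁ x := congrArg q₁ e2
      · have e1 : sigmaMap (n+1) i ⟨(x:ℕ)+1, by omega⟩ = x := by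
          apply Fin.ext; rw [sig_coe]; have := x.isLt; simp only [Fin.val_mk]; split_ifs <;> omega
        have e2 : sigmaMap (n+1) (i+1) ⟨(x:ℕ)+1, by omega⟩ = x := by
          apply Fin.ext; rw [sig_coe]; have := x.isLt; simp only [Fin.val_mk]; split_ifs <;> omega
        calc q₀ x = q₀ (sigmaMap (n+1) i ⟨(x:ℕ)+1, by omega⟩) := (congrArg q₀ e1).symm
          _ = q₁ (sigmaMap (n+1) (i+1) ⟨(x:ℕ)+1, by omega⟩) := key _
          _ = q₁ x := congrArg q₁ e2
    -- q₀ i = q₀ (i+1)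
    have keyii : q₀ ⟨i, by omega⟩ = q₀ ⟨i+1, by omega⟩ := by
      have e1 : sigmaMap (n+1) i ⟨i+1, by omega⟩ = ⟨i, by omega⟩ := by
        apply Fin.ext; rw [sig_coe]; simp only [Fin.val_mk]; split_ifs <;> omega
      have e2 : sigmaMap (n+1) (i+1) ⟨i+1, by omega⟩ = ⟨i+1, by omega⟩ := by
        apply Fin.ext; rw [sig_coe]; simp only [Fin.val_mk]; split_ifs <;> omega
      calc q₀ ⟨i, by omega⟩ = q₀ (sigmaMap (n+1) i ⟨i+1, by omega⟩) := (congrArg q₀ e1).symm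
        _ = q₁ (sigmaMap (n+1) (i+1) ⟨i+1, by omega⟩) := key _
        _ = q₁ ⟨i+1, by omega⟩ := congrArg q₁ e2
        _ = q₀ ⟨i+1, by omega⟩ := (q01 _).symm
    -- q₀ constant on fibers of sigmaMap n i
    have fib : ∀ x y : Fin (n+2), sigmaMap n i x = sigmaMap n i y → q₀ x = q₀ y := by
      intro x y hxy
      have hc : ((sigmaMap n i x : Fin (n+1)) : ℕ) = ((sigmaMap n i y : Fin (n+1)) : ℕ) :=
        congrArg Fin.val hxy
      rw [sig_coe, sig_coe] at hc
      have hx := x.isLt; have hy := y.isLt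
      have : (x:ℕ) = (y:ℕ) ∨ ((x:ℕ) = i ∧ (y:ℕ) = i+1) ∨ ((x:ℕ) = i+1 ∧ (y:ℕ) = i) := by
        split_ifs at hc <;> omega
      rcases this with h | ⟨h1, h2⟩ | ⟨h1, h2⟩
      · congr 1; exact Fin.ext h
      · have ex : x = ⟨i, by omega⟩ := Fin.ext h1
        have ey : y = ⟨i+1, by omega⟩ := Fin.ext h2
        exact (congrArg q₀ ex).trans (keyii.trans (congrArg q₀ ey).symm)
      · have ex : x = ⟨i+1, by omega⟩ := Fin.ext h1
        have ey : y = ⟨i, by omega⟩ := Fin.ext h2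
        exact (congrArg q₀ ex).trans (keyii.symm.trans (congrArg q₀ ey).symm)
    -- section
    have sec_sig : ∀ y : Fin (n+1), sigmaMap n i (secMap n i y) = y := by
      intro y; apply Fin.ext; rw [sig_coe, sec_coe]
      have := y.isLt; split_ifs <;> omega
    refine ⟨fun y => q₀ (secMap n i y), ⟨⟨?_, ?_⟩, ?_, ?_⟩, ?_⟩
    · -- monotone
      intro y y' hyy
      apply hq₀m
      show ((secMap n i y : Fin (n+2)) : ℕ) ≤ (secMap n i y' : Fin (n+2))
      rw [sec_coe, sec_coe]
      have : (y:ℕ) ≤ (y':ℕ) := hyy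
      split_ifs <;> omega
    · -- surjective
      intro z
      obtain ⟨x, hx⟩ := hq₀s z
      refine ⟨sigmaMap n i x, ?_⟩
      rw [← hx]
      exact fib _ _ (sec_sig _)
    · funext x
      exact fib _ _ (sec_sig _)
    · funext x
      show q₀ (secMap n i (sigmaMap n i x)) = q₁ x
      rw [← q01]
      exact fib _ _ (sec_sig _)
    · intro h' ⟨_, hh0, _⟩
      funext y
      have : h' (sigmaMap n i (secMap n i y)) = q₀ (secMap n i y) := congrFun hh0 (secMap n i y)
      rw [sec_sig] at this
      exact this
end
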